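/- arXiv:2601.04267 — 6 statements merged into one kernel-verified Lean document; each statement's English description precedes it below -/
import Mathlib

section
/- Let V be a finite set of mutually independent {0,1}-valued random variables with nonnegative weights, Z = ∑_{i∈V} w_i X_i, and define M(A) = I(Z; X_A) for A ⊆ V, where I denotes mutual information. Then M is supermodular: for all A ⊆ B ⊆ V and w ∈ V∖B, M(B ∪ {w}) − M(B) ≥ M(A ∪ {w}) − M(A). -/
open Finset Real

/-- Probability mass of the event `Y = a` under the weight function `μ` on a finite sample space. -/
noncomputable def pmass {Ω α : Type} [Fintype Ω] [DecidableEq α]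
    (μ : Ω → ℝ) (Y : Ω → α) (a : α) : ℝ :=
  ∑ ω, if Y ω = a then μ ω else 0

/-- Shannon entropy (base 2) of the random variable `Y` under `μ`. -/
noncomputable def ent {Ω α : Type} [Fintype Ω] [DecidableEq α]
    (μ : Ω → ℝ) (Y : Ω → α) : ℝ :=
  -∑ a ∈ Finset.univ.image Y, pmass μ Y a * Real.logb 2 (pmass μ Y a)

/-- The conditional measure given the event `W = b`. -/
noncomputable def condMeasure {Ω β : Type} [Fintype Ω] [DecidableEq β]
    (μ : Ω → ℝ) (W : Ω → β) (b : β) : Ω → ℝ :=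
  fun ω => if W ω = b then μ ω / pmass μ W b else 0

/-- Conditional Shannon entropy `H(Y | W) = ∑_b P(W = b) H(Y | W = b)`. -/
noncomputable def condEnt {Ω α β : Type} [Fintype Ω] [DecidableEq α] [DecidableEq β]
    (μ : Ω → ℝ) (Y : Ω → α) (W : Ω → β) : ℝ :=
  ∑ b ∈ Finset.univ.image W, pmass μ W b * ent (condMeasure μ W b) Y

/-- Mutual independence of a finite family of Boolean random variables:
the joint distribution factorizes. -/
def MutIndep {Ω V : Type} [Fintype Ω] [Fintype V] [DecidableEq V]
    (μ : Ω → ℝ) (X : V → Ω → Bool) : Prop :=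
  ∀ s : V → Bool, pmass μ (fun ω i => X i ω) s = ∏ i, pmass μ (X i) (s i)

/-- Binary entropy function (base 2). -/
noncomputable def binEnt (p : ℝ) : ℝ :=
  -(p * Real.logb 2 p) - (1 - p) * Real.logb 2 (1 - p)
/-- `M(A) = I(Z; X_A) = H(Z) - H(Z | X_A)`, the mutual information of the weighted
prevalence `Z` with the state vector of the nodes in `A`. -/
noncomputable def prevMI {Ω V : Type} [Fintype Ω] [Fintype V] [DecidableEq V]
    (μ : Ω → ℝ) (X : V → Ω → Bool) (w : V → ℝ) (A : Finset V) : ℝ :=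
  ent μ (fun ω => ∑ i, w i * (if X i ω then 1 else 0)) -
    condEnt μ (fun ω => ∑ i, w i * (if X i ω then 1 else 0))
      (fun ω (i : {x // x ∈ A}) => X i.1 ω)

namespace SM
variable {Ω α β γ : Type} [Fintype Ω] [DecidableEq α] [DecidableEq β] [DecidableEq γ]

noncomputable def phi (x : ℝ) : ℝ := Real.negMulLog x / Real.log 2

lemma phi_zero : phi 0 = 0 := by simp [phi]

lemma phi_def (x : ℝ) : phi x = -(x * Real.logb 2 x) := by
  simp only [phi, Real.negMulLog, Real.logb]; ring

lemma ent_eq (μ : Ω → ℝ) (Y : Ω → α) :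
    ent μ Y = ∑ a ∈ Finset.univ.image Y, phi (pmass μ Y a) := by
  rw [ent, ← Finset.sum_neg_distrib]
  exact Finset.sum_congr rfl fun a _ => (phi_def _).symm

lemma pmass_nonneg {μ : Ω → ℝ} (hμ0 : ∀ ω, 0 ≤ μ ω) (Y : Ω → α) (a : α) : 0 ≤ pmass μ Y a := by
  refine Finset.sum_nonneg fun ω _ => ?_
  split <;> simp [hμ0 ω]

lemma pmass_eq_zero {Y : Ω → α} {a : α} (h : a ∉ Finset.univ.image Y) (μ : Ω → ℝ) :
    pmass μ Y a = 0 := by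
  refine Finset.sum_eq_zero fun ω _ => ?_
  rw [if_neg]; intro hYa; exact h (Finset.mem_image.2 ⟨ω, Finset.mem_univ ω, hYa⟩)

lemma ent_eq_sum_subset {Y : Ω → α} {s : Finset α} (h : Finset.univ.image Y ⊆ s) (μ : Ω → ℝ) :
    ent μ Y = ∑ a ∈ s, phi (pmass μ Y a) := by
  rw [ent_eq]
  refine Finset.sum_subset h fun a _ ha => ?_
  rw [pmass_eq_zero ha, phi_zero]

lemma sum_pmass {Y : Ω → α} {s : Finset α} (h : Finset.univ.image Y ⊆ s) (μ : Ω → ℝ) :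
    ∑ a ∈ s, pmass μ Y a = ∑ ω, μ ω := by
  simp only [pmass]
  rw [Finset.sum_comm]
  refine Finset.sum_congr rfl fun ω _ => ?_
  rw [Finset.sum_ite_eq s (Y ω) (fun _ => μ ω), if_pos (h (Finset.mem_image_of_mem Y (Finset.mem_univ ω)))]

lemma pmass_comp_inj {f : α → γ} (hf : Function.Injective f) (μ : Ω → ℝ) (Y : Ω → α) (a : α) :
    pmass μ (fun ω => f (Y ω)) (f a) = pmass μ Y a := by
  refine Finset.sum_congr rfl fun ω _ => ?_
  simp [hf.eq_iff]

lemma ent_comp_inj {f : α → γ} (hf : Function.Injective f) (μ : Ω → ℝ) (Y : Ω → α) :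
    ent μ (fun ω => f (Y ω)) = ent μ Y := by
  rw [ent_eq, ent_eq]
  have himg : Finset.univ.image (fun ω => f (Y ω)) = (Finset.univ.image Y).image f := by
    exact (Finset.image_image).symm
  rw [himg, Finset.sum_image (fun x _ y _ h => hf h)]
  exact Finset.sum_congr rfl fun a _ => by rw [pmass_comp_inj hf]

lemma pmass_congr {μ : Ω → ℝ} {Y Y' : Ω → α} (h : ∀ ω, μ ω ≠ 0 → Y ω = Y' ω) (a : α) :
    pmass μ Y a = pmass μ Y' a := by
  refine Finset.sum_congr rfl fun ω _ => ?_
  by_cases hμ : μ ω = 0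
  · simp [hμ]
  · rw [h ω hμ]

lemma ent_eq_of_pmass {μ ν : Ω → ℝ} {Y : Ω → α} {Y' : Ω → α}
    (h : ∀ a, pmass ν Y a = pmass μ Y' a) : ent ν Y = ent μ Y' := by
  rw [ent_eq_sum_subset (Finset.subset_union_left (s₂ := Finset.univ.image Y')) ν,
    ent_eq_sum_subset (Finset.subset_union_right (s₁ := Finset.univ.image Y)) μ]
  exact Finset.sum_congr rfl fun a _ => by rw [h]


lemma pmass_condMeasure (μ : Ω → ℝ) (W : Ω → β) (b : β) (Y : Ω → α) (a : α) :
    pmass (condMeasure μ W b) Y a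
      = pmass μ (fun ω => (Y ω, W ω)) (a, b) / pmass μ W b := by
  rw [pmass, pmass, Finset.sum_div]
  refine Finset.sum_congr rfl fun ω _ => ?_
  simp only [condMeasure, Prod.mk.injEq]
  by_cases h1 : Y ω = a <;> by_cases h2 : W ω = b <;> simp [h1, h2]

lemma condMeasure_nonneg {μ : Ω → ℝ} (hμ0 : ∀ ω, 0 ≤ μ ω) (W : Ω → β) (b : β) (ω : Ω) :
    0 ≤ condMeasure μ W b ω := by
  rw [condMeasure]
  split
  · exact div_nonneg (hμ0 ω) (pmass_nonneg hμ0 W b)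
  · exact le_refl 0

lemma sum_condMeasure {μ : Ω → ℝ} {W : Ω → β} {b : β} (hp : pmass μ W b ≠ 0) : ∑ ω, condMeasure μ W b ω = 1 := by
  have : ∀ ω, condMeasure μ W b ω = (if W ω = b then μ ω else 0) / pmass μ W b := by
    intro ω; rw [condMeasure]; split <;> simp
  simp only [this]
  rw [← Finset.sum_div, ← pmass, div_self hp]

lemma pmass_pair_le_right {μ : Ω → ℝ} (hμ0 : ∀ ω, 0 ≤ μ ω) (Y : Ω → α) (W : Ω → β) (a : α) (b : β) :
    pmass μ (fun ω => (Y ω, W ω)) (a, b) ≤ pmass μ W b := by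
  refine Finset.sum_le_sum fun ω _ => ?_
  by_cases h1 : Y ω = a <;> by_cases h2 : W ω = b <;> simp [h1, h2, hμ0 ω, le_refl]

lemma pmass_pair_le_left {μ : Ω → ℝ} (hμ0 : ∀ ω, 0 ≤ μ ω) (Y : Ω → α) (W : Ω → β) (a : α) (b : β) :
    pmass μ (fun ω => (Y ω, W ω)) (a, b) ≤ pmass μ Y a := by
  refine Finset.sum_le_sum fun ω _ => ?_
  by_cases h1 : Y ω = a <;> by_cases h2 : W ω = b <;> simp [h1, h2, hμ0 ω, le_refl]

lemma pair_nonneg {μ : Ω → ℝ} (hμ0 : ∀ ω, 0 ≤ μ ω) (Y : Ω → α) (W : Ω → β) (a : α) (b : β) :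
    0 ≤ pmass μ (fun ω => (Y ω, W ω)) (a, b) := pmass_nonneg hμ0 _ _

lemma pmass_pair_eq_zero_right {μ : Ω → ℝ} (hμ0 : ∀ ω, 0 ≤ μ ω) {W : Ω → β} {b : β}
    (h : pmass μ W b = 0) (Y : Ω → α) (a : α) :
    pmass μ (fun ω => (Y ω, W ω)) (a, b) = 0 :=
  le_antisymm (h ▸ pmass_pair_le_right hμ0 Y W a b) (pair_nonneg hμ0 Y W a b)

lemma pmass_pair_eq_zero_left {μ : Ω → ℝ} (hμ0 : ∀ ω, 0 ≤ μ ω) {Y : Ω → α} {a : α}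
    (h : pmass μ Y a = 0) (W : Ω → β) (b : β) :
    pmass μ (fun ω => (Y ω, W ω)) (a, b) = 0 :=
  le_antisymm (h ▸ pmass_pair_le_left hμ0 Y W a b) (pair_nonneg hμ0 Y W a b)

lemma sum_pmass_pair_fst {Y : Ω → α} {s : Finset α} (h : Finset.univ.image Y ⊆ s)
    (μ : Ω → ℝ) (W : Ω → β) (b : β) :
    ∑ a ∈ s, pmass μ (fun ω => (Y ω, W ω)) (a, b) = pmass μ W b := by
  simp only [pmass]
  rw [Finset.sum_comm]
  refine Finset.sum_congr rfl fun ω _ => ?_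
  by_cases h2 : W ω = b
  · simp only [Prod.mk.injEq, h2, and_true]
    rw [Finset.sum_ite_eq s (Y ω) (fun _ => μ ω),
      if_pos (h (Finset.mem_image_of_mem Y (Finset.mem_univ ω)))]
    simp
  · simp [Prod.mk.injEq, h2]

lemma sum_pmass_pair_snd {W : Ω → β} {s : Finset β} (h : Finset.univ.image W ⊆ s)
    (μ : Ω → ℝ) (Y : Ω → α) (a : α) :
    ∑ b ∈ s, pmass μ (fun ω => (Y ω, W ω)) (a, b) = pmass μ Y a := by
  simp only [pmass]
  rw [Finset.sum_comm]
  refine Finset.sum_congr rfl fun ω _ => ?_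
  by_cases h1 : Y ω = a
  · simp only [Prod.mk.injEq, h1, true_and]
    rw [Finset.sum_ite_eq s (W ω) (fun _ => μ ω),
      if_pos (h (Finset.mem_image_of_mem W (Finset.mem_univ ω)))]
    simp
  · simp [Prod.mk.injEq, h1]

lemma condEnt_eq (μ : Ω → ℝ) (Y : Ω → α) (W : Ω → β) :
    condEnt μ Y W = ∑ b ∈ Finset.univ.image W, pmass μ W b *
      ∑ a ∈ Finset.univ.image Y, phi (pmass μ (fun ω => (Y ω, W ω)) (a, b) / pmass μ W b) := by
  rw [condEnt]
  refine Finset.sum_congr rfl fun b _ => ?_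
  rw [ent_eq]
  congr 1
  exact Finset.sum_congr rfl fun a _ => by rw [pmass_condMeasure]

lemma concaveOn_phi : ConcaveOn ℝ (Set.Ici (0:ℝ)) phi := by
  have h2 : (0:ℝ) ≤ (Real.log 2)⁻¹ := inv_nonneg.2 (Real.log_nonneg one_le_two)
  have hphi : phi = (Real.log 2)⁻¹ • Real.negMulLog := by
    funext x; simp [phi, smul_eq_mul, div_eq_inv_mul]
  rw [hphi]
  exact Real.concaveOn_negMulLog.smul h2

lemma condEnt_le_ent {μ : Ω → ℝ} (hμ0 : ∀ ω, 0 ≤ μ ω) (hμ1 : ∑ ω, μ ω = 1) (Y : Ω → α) (W : Ω → β) :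
    condEnt μ Y W ≤ ent μ Y := by
  rw [condEnt_eq, ent_eq]
  simp only [Finset.mul_sum]
  rw [Finset.sum_comm]
  refine Finset.sum_le_sum fun a _ => ?_
  have key : ∑ b ∈ Finset.univ.image W,
      pmass μ W b • (pmass μ (fun ω => (Y ω, W ω)) (a, b) / pmass μ W b)
      = pmass μ Y a := by
    rw [← sum_pmass_pair_snd (W := W) (s := Finset.univ.image W) (Finset.Subset.refl _) μ Y a]
    refine Finset.sum_congr rfl fun b _ => ?_
    by_cases hp : pmass μ W b = 0
    · rw [hp, pmass_pair_eq_zero_right hμ0 hp]; simp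
    · rw [smul_eq_mul, mul_div_cancel₀ _ hp]
  calc ∑ b ∈ Finset.univ.image W,
      pmass μ W b * phi (pmass μ (fun ω => (Y ω, W ω)) (a, b) / pmass μ W b)
      ≤ phi (∑ b ∈ Finset.univ.image W,
          pmass μ W b • (pmass μ (fun ω => (Y ω, W ω)) (a, b) / pmass μ W b)) := by
        refine concaveOn_phi.le_map_sum (fun b _ => pmass_nonneg hμ0 W b) ?_ ?_
        · rw [sum_pmass (Finset.Subset.refl _), hμ1]
        · intro b _
          exact div_nonneg (pair_nonneg hμ0 Y W a b) (pmass_nonneg hμ0 W b)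
    _ = phi (pmass μ Y a) := by rw [key]

lemma condEnt_comp_inj {g : β → γ} (hg : Function.Injective g) (μ : Ω → ℝ) (Y : Ω → α)
    (W : Ω → β) : condEnt μ Y (fun ω => g (W ω)) = condEnt μ Y W := by
  rw [condEnt, condEnt]
  have himg : Finset.univ.image (fun ω => g (W ω)) = (Finset.univ.image W).image g :=
    (Finset.image_image).symm
  rw [himg, Finset.sum_image (fun x _ y _ h => hg h)]
  refine Finset.sum_congr rfl fun b _ => ?_
  have hcm : condMeasure μ (fun ω => g (W ω)) (g b) = condMeasure μ W b := by
    funext ω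
    simp only [condMeasure, hg.eq_iff, pmass_comp_inj hg]
  rw [pmass_comp_inj hg, hcm]


lemma pmass_pair_comm (μ : Ω → ℝ) (Y : Ω → α) (W : Ω → β) (a : α) (b : β) :
    pmass μ (fun ω => (W ω, Y ω)) (b, a) = pmass μ (fun ω => (Y ω, W ω)) (a, b) := by
  refine Finset.sum_congr rfl fun ω _ => ?_
  simp [Prod.mk.injEq, and_comm]

lemma condEnt_pair {μ : Ω → ℝ} (hμ0 : ∀ ω, 0 ≤ μ ω) (Y : Ω → α) (W1 : Ω → β) (W2 : Ω → γ) :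
    condEnt μ Y (fun ω => (W1 ω, W2 ω)) =
      ∑ b1 ∈ Finset.univ.image W1, pmass μ W1 b1 * condEnt (condMeasure μ W1 b1) Y W2 := by
  rw [condEnt]
  have hsub : Finset.univ.image (fun ω => (W1 ω, W2 ω)) ⊆
      (Finset.univ.image W1) ×ˢ (Finset.univ.image W2) := by
    intro p hp
    rcases Finset.mem_image.1 hp with ⟨ω, _, rfl⟩
    exact Finset.mem_product.2 ⟨Finset.mem_image_of_mem _ (Finset.mem_univ ω),
      Finset.mem_image_of_mem _ (Finset.mem_univ ω)⟩
  rw [Finset.sum_subset hsub (fun p _ hp => by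
    rw [pmass_eq_zero hp, zero_mul])]
  rw [Finset.sum_product]
  refine Finset.sum_congr rfl fun b1 _ => ?_
  rw [condEnt, Finset.mul_sum]
  refine Finset.sum_congr rfl fun b2 _ => ?_
  by_cases h1 : pmass μ W1 b1 = 0
  · rw [h1, pmass_pair_eq_zero_left hμ0 h1 W2 b2, zero_mul, zero_mul]
  · have hq : pmass (condMeasure μ W1 b1) W2 b2
        = pmass μ (fun ω => (W1 ω, W2 ω)) (b1, b2) / pmass μ W1 b1 := by
      rw [pmass_condMeasure, pmass_pair_comm]
    have hpq : pmass μ W1 b1 * pmass (condMeasure μ W1 b1) W2 b2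
        = pmass μ (fun ω => (W1 ω, W2 ω)) (b1, b2) := by
      rw [hq, mul_div_cancel₀ _ h1]
    have hm : condMeasure (condMeasure μ W1 b1) W2 b2
        = condMeasure μ (fun ω => (W1 ω, W2 ω)) (b1, b2) := by
      funext ω
      by_cases hw2 : W2 ω = b2 <;> by_cases hw1 : W1 ω = b1
      · simp only [condMeasure, hw1, hw2, Prod.mk.injEq, and_self, if_true, div_div, hpq]
      · simp [condMeasure, hw1, hw2]
      · simp [condMeasure, hw1, hw2]
      · simp [condMeasure, hw1, hw2]
    rw [hm, ← mul_assoc, hpq]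

lemma condEnt_eq_of_joint {μ ν : Ω → ℝ} {Y : Ω → α} {W : Ω → β}
    (h : ∀ a b, pmass ν (fun ω => (Y ω, W ω)) (a, b) = pmass μ (fun ω => (Y ω, W ω)) (a, b)) :
    condEnt ν Y W = condEnt μ Y W := by
  have hW : ∀ b, pmass ν W b = pmass μ W b := fun b => by
    rw [← sum_pmass_pair_fst (Y := Y) (s := Finset.univ.image Y) (Finset.Subset.refl _) ν W b,
      ← sum_pmass_pair_fst (Y := Y) (s := Finset.univ.image Y) (Finset.Subset.refl _) μ W b]
    exact Finset.sum_congr rfl fun a _ => h a b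
  rw [condEnt_eq, condEnt_eq]
  refine Finset.sum_congr rfl fun b _ => ?_
  rw [hW b]
  congr 1
  exact Finset.sum_congr rfl fun a _ => by rw [h a b]

lemma phi_div {x y : ℝ} (hxy : x ≠ 0 → y ≠ 0) :
    y * phi (x / y) = phi x + x * Real.logb 2 y := by
  by_cases h : x = 0
  · simp [h, phi_zero]
  · have hy := hxy h
    rw [phi_def, phi_def, Real.logb_div h hy]
    field_simp
    ring

lemma chain_rule {μ : Ω → ℝ} (hμ0 : ∀ ω, 0 ≤ μ ω) (Y : Ω → α) (W : Ω → β) :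
    ent μ (fun ω => (Y ω, W ω)) = ent μ W + condEnt μ Y W := by
  have hsub : Finset.univ.image (fun ω => (Y ω, W ω)) ⊆
      (Finset.univ.image Y) ×ˢ (Finset.univ.image W) := by
    intro p hp
    rcases Finset.mem_image.1 hp with ⟨ω, _, rfl⟩
    exact Finset.mem_product.2 ⟨Finset.mem_image_of_mem _ (Finset.mem_univ ω),
      Finset.mem_image_of_mem _ (Finset.mem_univ ω)⟩
  have hent : ent μ (fun ω => (Y ω, W ω)) = ∑ b ∈ Finset.univ.image W,
      ∑ a ∈ Finset.univ.image Y, phi (pmass μ (fun ω => (Y ω, W ω)) (a, b)) := by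
    rw [ent_eq_sum_subset hsub μ, Finset.sum_product, Finset.sum_comm]
  have hcond : condEnt μ Y W = ∑ b ∈ Finset.univ.image W,
      ∑ a ∈ Finset.univ.image Y, phi (pmass μ (fun ω => (Y ω, W ω)) (a, b))
      + ∑ b ∈ Finset.univ.image W, pmass μ W b * Real.logb 2 (pmass μ W b) := by
    rw [condEnt_eq, ← Finset.sum_add_distrib]
    refine Finset.sum_congr rfl fun b _ => ?_
    rw [Finset.mul_sum]
    have : ∀ a ∈ Finset.univ.image Y,
        pmass μ W b * phi (pmass μ (fun ω => (Y ω, W ω)) (a, b) / pmass μ W b)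
        = phi (pmass μ (fun ω => (Y ω, W ω)) (a, b))
          + pmass μ (fun ω => (Y ω, W ω)) (a, b) * Real.logb 2 (pmass μ W b) := by
      intro a _
      refine phi_div fun hne hb => hne (pmass_pair_eq_zero_right hμ0 hb Y a)
    rw [Finset.sum_congr rfl this, Finset.sum_add_distrib, ← Finset.sum_mul,
      sum_pmass_pair_fst (Finset.Subset.refl _) μ W b]
  have hW : ent μ W = -∑ b ∈ Finset.univ.image W, pmass μ W b * Real.logb 2 (pmass μ W b) := rfl
  rw [hent, hcond, hW]
  ring

lemma ent_pair_comm (μ : Ω → ℝ) (Y : Ω → α) (W : Ω → β) :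
    ent μ (fun ω => (Y ω, W ω)) = ent μ (fun ω => (W ω, Y ω)) :=
  ent_comp_inj (f := Prod.swap (α := β) (β := α)) Prod.swap_injective μ
    (fun ω => (W ω, Y ω))

lemma condEnt_pair_indep {μ : Ω → ℝ} (hμ0 : ∀ ω, 0 ≤ μ ω) (hμ1 : ∑ ω, μ ω = 1)
    (Y : Ω → α) (W : Ω → β) (W3 : Ω → γ)
    (hind : ∀ x c, pmass μ (fun ω => ((Y ω, W ω), W3 ω)) (x, c)
      = pmass μ (fun ω => (Y ω, W ω)) x * pmass μ W3 c) :
    condEnt μ Y (fun ω => (W ω, W3 ω)) = condEnt μ Y W := by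
  have hswap : condEnt μ Y (fun ω => (W ω, W3 ω)) = condEnt μ Y (fun ω => (W3 ω, W ω)) :=
    condEnt_comp_inj (g := Prod.swap (α := γ) (β := β)) Prod.swap_injective μ Y
      (fun ω => (W3 ω, W ω))
  rw [hswap, condEnt_pair hμ0 Y W3 W]
  have : ∀ c ∈ Finset.univ.image W3,
      pmass μ W3 c * condEnt (condMeasure μ W3 c) Y W = pmass μ W3 c * condEnt μ Y W := by
    intro c _
    by_cases hp : pmass μ W3 c = 0
    · rw [hp, zero_mul, zero_mul]
    · congr 1
      refine condEnt_eq_of_joint fun a b => ?_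
      rw [pmass_condMeasure μ W3 c (fun ω => (Y ω, W ω)) (a, b), hind (a, b) c,
        mul_div_cancel_right₀ _ hp]
  rw [Finset.sum_congr rfl this, ← Finset.sum_mul, sum_pmass (Finset.Subset.refl _), hμ1, one_mul]

lemma condEnt_le_condEnt_comp {μ : Ω → ℝ} (hμ0 : ∀ ω, 0 ≤ μ ω) (hμ1 : ∑ ω, μ ω = 1)
    (Y : Ω → α) (W : Ω → β) (f : β → γ) :
    condEnt μ Y W ≤ condEnt μ Y (fun ω => f (W ω)) := by
  have hinj : Function.Injective (fun b : β => (f b, b)) := fun x y h => congrArg Prod.snd h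
  have h1 : condEnt μ Y W = condEnt μ Y (fun ω => (f (W ω), W ω)) :=
    (condEnt_comp_inj hinj μ Y W).symm
  rw [h1, condEnt_pair hμ0 Y (fun ω => f (W ω)) W]
  calc ∑ c ∈ Finset.univ.image (fun ω => f (W ω)),
        pmass μ (fun ω => f (W ω)) c * condEnt (condMeasure μ (fun ω => f (W ω)) c) Y W
      ≤ ∑ c ∈ Finset.univ.image (fun ω => f (W ω)),
        pmass μ (fun ω => f (W ω)) c * ent (condMeasure μ (fun ω => f (W ω)) c) Y := by
        refine Finset.sum_le_sum fun c _ => ?_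
        by_cases hp : pmass μ (fun ω => f (W ω)) c = 0
        · rw [hp, zero_mul, zero_mul]
        · exact mul_le_mul_of_nonneg_left
            (condEnt_le_ent (condMeasure_nonneg hμ0 _ c) (sum_condMeasure hp) Y W)
            (pmass_nonneg hμ0 _ c)
    _ = condEnt μ Y (fun ω => f (W ω)) := rfl

lemma condEnt_eq_ent_shift {κ : Type} [DecidableEq κ] {μ : Ω → ℝ}
    (hμ0 : ∀ ω, 0 ≤ μ ω) (hμ1 : ∑ ω, μ ω = 1)
    (Y T : Ω → ℝ) (G : Ω → κ) (c : κ → ℝ)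
    (hsh : ∀ ω a, G ω = a → Y ω = c a + T ω)
    (hind : ∀ t a, pmass μ (fun ω => (T ω, G ω)) (t, a) = pmass μ T t * pmass μ G a) :
    condEnt μ Y G = ent μ T := by
  rw [condEnt]
  have hterm : ∀ a ∈ Finset.univ.image G,
      pmass μ G a * ent (condMeasure μ G a) Y = pmass μ G a * ent μ T := by
    intro a _
    by_cases hp : pmass μ G a = 0
    · rw [hp, zero_mul, zero_mul]
    · congr 1
      have hsupp : ∀ ω, condMeasure μ G a ω ≠ 0 → G ω = a := by
        intro ω hne
        by_contra h
        exact hne (by simp [condMeasure, h])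
      have s1 : ent (condMeasure μ G a) Y = ent (condMeasure μ G a) (fun ω => c a + T ω) :=
        ent_eq_of_pmass fun z => pmass_congr (fun ω hne => hsh ω a (hsupp ω hne)) z
      have s2 : ent (condMeasure μ G a) (fun ω => c a + T ω) = ent (condMeasure μ G a) T :=
        ent_comp_inj (add_right_injective (c a)) _ T
      have s3 : ent (condMeasure μ G a) T = ent μ T := by
        refine ent_eq_of_pmass fun t => ?_
        rw [pmass_condMeasure, hind t a, mul_div_cancel_right₀ _ hp]
      rw [s1, s2, s3]
  rw [Finset.sum_congr rfl hterm, ← Finset.sum_mul, sum_pmass (Finset.Subset.refl _), hμ1, one_mul]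

lemma ent_add_submodular {μ : Ω → ℝ} (hμ0 : ∀ ω, 0 ≤ μ ω) (hμ1 : ∑ ω, μ ω = 1)
    (Y1 Y2 Y3 : Ω → ℝ)
    (hiTU : ∀ t a, pmass μ (fun ω => (Y2 ω + Y3 ω, Y1 ω)) (t, a)
      = pmass μ (fun ω => Y2 ω + Y3 ω) t * pmass μ Y1 a)
    (hi2 : ∀ t a, pmass μ (fun ω => (Y2 ω, Y1 ω)) (t, a)
      = pmass μ Y2 t * pmass μ Y1 a)
    (hi3 : ∀ x c, pmass μ (fun ω => ((Y1 ω, Y1 ω + Y2 ω), Y3 ω)) (x, c)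
      = pmass μ (fun ω => (Y1 ω, Y1 ω + Y2 ω)) x * pmass μ Y3 c) :
    ent μ (fun ω => Y1 ω + Y2 ω + Y3 ω) + ent μ Y2
      ≤ ent μ (fun ω => Y1 ω + Y2 ω) + ent μ (fun ω => Y2 ω + Y3 ω) := by
  have c1 : ent μ (fun ω => Y1 ω + Y2 ω + Y3 ω) + condEnt μ Y1 (fun ω => Y1 ω + Y2 ω + Y3 ω)
      = ent μ Y1 + condEnt μ (fun ω => Y1 ω + Y2 ω + Y3 ω) Y1 := by
    rw [← chain_rule hμ0 Y1 (fun ω => Y1 ω + Y2 ω + Y3 ω),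
      ← chain_rule hμ0 (fun ω => Y1 ω + Y2 ω + Y3 ω) Y1,
      ent_pair_comm]
  have c2 : ent μ (fun ω => Y1 ω + Y2 ω) + condEnt μ Y1 (fun ω => Y1 ω + Y2 ω)
      = ent μ Y1 + condEnt μ (fun ω => Y1 ω + Y2 ω) Y1 := by
    rw [← chain_rule hμ0 Y1 (fun ω => Y1 ω + Y2 ω),
      ← chain_rule hμ0 (fun ω => Y1 ω + Y2 ω) Y1,
      ent_pair_comm]
  have hU1 : condEnt μ (fun ω => Y1 ω + Y2 ω + Y3 ω) Y1 = ent μ (fun ω => Y2 ω + Y3 ω) := by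
    refine condEnt_eq_ent_shift hμ0 hμ1 _ _ _ (fun a => a) (fun ω a h => ?_) hiTU
    rw [← h, add_assoc]
  have hS1 : condEnt μ (fun ω => Y1 ω + Y2 ω) Y1 = ent μ Y2 := by
    refine condEnt_eq_ent_shift hμ0 hμ1 _ _ _ (fun a => a) (fun ω a h => ?_) hi2
    rw [← h]
  have dpi : condEnt μ Y1 (fun ω => (Y1 ω + Y2 ω, Y3 ω))
      ≤ condEnt μ Y1 (fun ω => Y1 ω + Y2 ω + Y3 ω) :=
    condEnt_le_condEnt_comp hμ0 hμ1 Y1 (fun ω => (Y1 ω + Y2 ω, Y3 ω)) (fun p => p.1 + p.2)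
  have hind' : condEnt μ Y1 (fun ω => (Y1 ω + Y2 ω, Y3 ω)) = condEnt μ Y1 (fun ω => Y1 ω + Y2 ω) :=
    condEnt_pair_indep hμ0 hμ1 Y1 (fun ω => Y1 ω + Y2 ω) Y3 hi3
  linarith


section Master
variable {V : Type} [Fintype V] [DecidableEq V]

lemma pmass_comp_tuple (μ : Ω → ℝ) (X : V → Ω → Bool) (F : (V → Bool) → α) (a : α) :
    pmass μ (fun ω => F (fun i => X i ω)) a
      = ∑ s : V → Bool, if F s = a then pmass μ (fun ω (i : V) => X i ω) s else 0 := by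
  have h1 : ∀ s : V → Bool, (if F s = a then pmass μ (fun ω (i : V) => X i ω) s else 0)
      = ∑ ω, if (fun i => X i ω) = s then (if F s = a then μ ω else 0) else 0 := by
    intro s
    by_cases hFs : F s = a
    · simp only [if_pos hFs, pmass]
    · simp [hFs]
  calc pmass μ (fun ω => F fun i => X i ω) a
      = ∑ ω, ∑ s : V → Bool, if (fun i => X i ω) = s then (if F s = a then μ ω else 0) else 0 := by
        rw [pmass]
        refine Finset.sum_congr rfl fun ω _ => ?_
        rw [Finset.sum_ite_eq Finset.univ (fun i => X i ω)
          (fun s => if F s = a then μ ω else 0)]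
        simp
    _ = ∑ s : V → Bool, ∑ ω, if (fun i => X i ω) = s then (if F s = a then μ ω else 0) else 0 :=
        Finset.sum_comm
    _ = ∑ s : V → Bool, if F s = a then pmass μ (fun ω (i : V) => X i ω) s else 0 :=
        Finset.sum_congr rfl fun s _ => (h1 s).symm

lemma master_core {μ : Ω → ℝ} {X : V → Ω → Bool} (hind : MutIndep μ X) (S : Finset V)
    (F : (V → Bool) → α) (G : (V → Bool) → β)
    (hF : ∀ s t : V → Bool, (∀ i ∈ S, s i = t i) → F s = F t)
    (hG : ∀ s t : V → Bool, (∀ i ∉ S, s i = t i) → G s = G t) (a : α) (b : β) :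
    pmass μ (fun ω => (F (fun i => X i ω), G (fun i => X i ω))) (a, b)
      = (∑ u : {x // x ∈ S} → Bool,
          if F ((Equiv.piEquivPiSubtypeProd (fun x => x ∈ S) (fun _ => Bool)).symm
              (u, fun _ => false)) = a
          then ∏ i : {x // x ∈ S}, pmass μ (X i.1) (u i) else 0)
        * (∑ u' : {x // ¬ x ∈ S} → Bool,
          if G ((Equiv.piEquivPiSubtypeProd (fun x => x ∈ S) (fun _ => Bool)).symm
              (fun _ => false, u')) = b
          then ∏ i : {x // ¬ x ∈ S}, pmass μ (X i.1) (u' i) else 0) := by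
  have step1 : pmass μ (fun ω => (F (fun i => X i ω), G (fun i => X i ω))) (a, b)
      = ∑ s : V → Bool, if (F s, G s) = (a, b) then ∏ i, pmass μ (X i) (s i) else 0 := by
    refine (pmass_comp_tuple μ X (fun s => (F s, G s)) (a, b)).trans ?_
    exact Finset.sum_congr rfl fun s _ => by rw [hind s]
  rw [step1]
  rw [← Equiv.sum_comp ((Equiv.piEquivPiSubtypeProd (fun x => x ∈ S) (fun _ => Bool)).symm)
    (fun s => if (F s, G s) = (a, b) then ∏ i, pmass μ (X i) (s i) else 0)]
  rw [Fintype.sum_prod_type, Finset.sum_mul_sum]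
  refine Finset.sum_congr rfl fun u _ => Finset.sum_congr rfl fun u' _ => ?_
  set e := (Equiv.piEquivPiSubtypeProd (fun x => x ∈ S) (fun _ => Bool)).symm with he
  have heval : ∀ (p : ({x // x ∈ S} → Bool) × ({x // ¬ x ∈ S} → Bool)) (i : V),
      e p i = if h : i ∈ S then p.1 ⟨i, h⟩ else p.2 ⟨i, h⟩ := by
    intro p i
    simp [he, Equiv.piEquivPiSubtypeProd]
  have hFeq : F (e (u, u')) = F (e (u, fun _ => false)) := by
    refine hF _ _ fun i hi => ?_
    rw [heval, heval, dif_pos hi, dif_pos hi]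
  have hGeq : G (e (u, u')) = G (e (fun _ => false, u')) := by
    refine hG _ _ fun i hi => ?_
    rw [heval, heval, dif_neg hi, dif_neg hi]
  have hprod : ∏ i, pmass μ (X i) (e (u, u') i)
      = (∏ i : {x // x ∈ S}, pmass μ (X i.1) (u i))
        * ∏ i : {x // ¬ x ∈ S}, pmass μ (X i.1) (u' i) := by
    rw [← Fintype.prod_subtype_mul_prod_subtype (fun x => x ∈ S)
      (fun i => pmass μ (X i) (e (u, u') i))]
    have h1 : ∀ i : {x // x ∈ S}, pmass μ (X i.1) (e (u, u') i.1) = pmass μ (X i.1) (u i) :=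
      fun i => by rw [heval, dif_pos i.2]
    have h2 : ∀ i : {x // ¬ x ∈ S}, pmass μ (X i.1) (e (u, u') i.1) = pmass μ (X i.1) (u' i) :=
      fun i => by rw [heval, dif_neg i.2]
    simp only [h1, h2]
    congr!
  rw [hprod]
  simp only [Prod.mk.injEq, hFeq, hGeq]
  by_cases h1 : F (e (u, fun _ => false)) = a <;>
    by_cases h2 : G (e (fun _ => false, u')) = b <;> simp [h1, h2]

lemma pmass_pair_unit_fst (μ : Ω → ℝ) (Y : Ω → α) (a : α) :
    pmass μ (fun ω => (Y ω, ())) (a, ()) = pmass μ Y a := by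
  refine Finset.sum_congr rfl fun ω _ => ?_
  simp

lemma pmass_pair_unit_snd (μ : Ω → ℝ) (Y : Ω → α) (a : α) :
    pmass μ (fun ω => ((), Y ω)) ((), a) = pmass μ Y a := by
  refine Finset.sum_congr rfl fun ω _ => ?_
  simp

lemma master_indep {μ : Ω → ℝ} {X : V → Ω → Bool} (hμ1 : ∑ ω, μ ω = 1)
    (hind : MutIndep μ X) (S : Finset V)
    (F : (V → Bool) → α) (G : (V → Bool) → β)
    (hF : ∀ s t : V → Bool, (∀ i ∈ S, s i = t i) → F s = F t)
    (hG : ∀ s t : V → Bool, (∀ i ∉ S, s i = t i) → G s = G t) (a : α) (b : β) :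
    pmass μ (fun ω => (F (fun i => X i ω), G (fun i => X i ω))) (a, b)
      = pmass μ (fun ω => F (fun i => X i ω)) a * pmass μ (fun ω => G (fun i => X i ω)) b := by
  have htriv : ∀ s t : V → Bool, (∀ i ∈ S, s i = t i) → (() : Unit) = () := fun _ _ _ => rfl
  have htriv' : ∀ s t : V → Bool, (∀ i ∉ S, s i = t i) → (() : Unit) = () := fun _ _ _ => rfl
  have hjoint := master_core hind S F G hF hG a b
  have hf := master_core hind S F (fun _ => ()) hF (fun _ _ _ => rfl) a ()
  have hg := master_core hind S (fun _ => ()) G (fun _ _ _ => rfl) hG () b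
  have hone := master_core hind S (fun _ : V → Bool => ()) (fun _ : V → Bool => ())
    (fun _ _ _ => rfl) (fun _ _ _ => rfl) () ()
  rw [pmass_pair_unit_fst] at hf
  rw [pmass_pair_unit_snd] at hg
  have hone' : pmass μ (fun _ : Ω => ((), ())) ((), ()) = 1 := by
    rw [← hμ1]
    refine Finset.sum_congr rfl fun ω _ => by simp
  rw [hone'] at hone
  simp only [if_pos] at hf hg hone
  obtain ⟨c1, d1, Cc, Dd, hj', hf', hg', ho'⟩ :
      ∃ c1 d1 Cc Dd : ℝ,
        pmass μ (fun ω => (F (fun i => X i ω), G (fun i => X i ω))) (a, b) = c1 * d1 ∧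
        pmass μ (fun ω => F (fun i => X i ω)) a = c1 * Dd ∧
        pmass μ (fun ω => G (fun i => X i ω)) b = Cc * d1 ∧
        (1 : ℝ) = Cc * Dd :=
    ⟨_, _, _, _, hjoint, hf, hg, hone⟩
  rw [hj', hf', hg']
  linear_combination c1 * d1 * ho'


lemma condEnt_tuple {μ : Ω → ℝ} {X : V → Ω → Bool} (hμ0 : ∀ ω, 0 ≤ μ ω)
    (hμ1 : ∑ ω, μ ω = 1) (hind : MutIndep μ X) (w : V → ℝ) (A : Finset V) :
    condEnt μ (fun ω => ∑ i, w i * (if X i ω then (1:ℝ) else 0))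
      (fun ω (i : {x // x ∈ A}) => X i.1 ω)
      = ent μ (fun ω => ∑ i ∈ Finset.univ \ A, w i * (if X i ω then (1:ℝ) else 0)) := by
  refine condEnt_eq_ent_shift hμ0 hμ1 _ _ _
    (fun s : {x // x ∈ A} → Bool => ∑ i ∈ A.attach, w i.1 * (if s i then (1:ℝ) else 0))
    ?_ ?_
  · intro ω s hs
    have hsplit : (∑ i, w i * (if X i ω then (1:ℝ) else 0))
        = (∑ i ∈ Finset.univ \ A, w i * (if X i ω then (1:ℝ) else 0))
          + ∑ i ∈ A, w i * (if X i ω then (1:ℝ) else 0) :=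
      (Finset.sum_sdiff (Finset.subset_univ A)).symm
    rw [hsplit, add_comm]
    congr 1
    rw [← Finset.sum_attach A (fun i => w i * (if X i ω then (1:ℝ) else 0))]
    refine Finset.sum_congr rfl fun i _ => ?_
    have hXi : X i.1 ω = s i := congrFun hs i
    rw [hXi]
  · intro t s
    exact master_indep hμ1 hind (Finset.univ \ A)
      (fun f => ∑ i ∈ Finset.univ \ A, w i * (if f i then (1:ℝ) else 0))
      (fun f => (fun i : {x // x ∈ A} => f i.1))
      (fun f g h => Finset.sum_congr rfl fun i hi => by rw [h i hi])
      (fun f g h => funext fun i => by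
        rw [h i.1 (by simp [i.2])])
      t s

end Master
end SM

theorem stmt2 {Ω V : Type} [Fintype Ω] [Fintype V] [DecidableEq V]
    (μ : Ω → ℝ) (hμ0 : ∀ ω, 0 ≤ μ ω) (hμ1 : ∑ ω, μ ω = 1)
    (X : V → Ω → Bool) (hind : MutIndep μ X)
    (w : V → ℝ) (hw : ∀ i, 0 ≤ w i)
    (A B : Finset V) (hAB : A ⊆ B) (v : V) (hv : v ∉ B) :
    prevMI μ X w (insert v B) - prevMI μ X w B ≥
      prevMI μ X w (insert v A) - prevMI μ X w A := by
  classical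
  have hZ : ∀ A' : Finset V, prevMI μ X w A'
      = ent μ (fun ω => ∑ i, w i * (if X i ω then (1:ℝ) else 0))
        - ent μ (fun ω => ∑ i ∈ Finset.univ \ A', w i * (if X i ω then (1:ℝ) else 0)) := by
    intro A'
    rw [prevMI, SM.condEnt_tuple hμ0 hμ1 hind w A']
  rw [hZ, hZ, hZ, hZ]
  set C := Finset.univ \ insert v B with hC
  set D := Finset.univ \ insert v A with hD
  have hvC : v ∉ C := by simp [hC]
  have hvD : v ∉ D := by simp [hD]
  have hCD : C ⊆ D :=
    Finset.sdiff_subset_sdiff (le_refl _) (Finset.insert_subset_insert v hAB)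
  have hins : ∀ P : Finset V, v ∉ P →
      Finset.univ \ P = insert v (Finset.univ \ insert v P) := by
    intro P hvP
    ext i
    simp only [Finset.mem_sdiff, Finset.mem_univ, true_and, Finset.mem_insert]
    by_cases hiv : i = v
    · subst hiv; simp [hvP]
    · simp [hiv]
  have hvA : v ∉ A := fun h => hv (hAB h)
  have hfB : (fun ω => ∑ i ∈ Finset.univ \ B, w i * (if X i ω then (1:ℝ) else 0))
      = (fun ω => (w v * (if X v ω then (1:ℝ) else 0))
          + ∑ i ∈ C, w i * (if X i ω then (1:ℝ) else 0)) := by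
    funext ω
    rw [hins B hv, Finset.sum_insert hvC]
  have hfD : (fun ω => ∑ i ∈ D, w i * (if X i ω then (1:ℝ) else 0))
      = (fun ω => (∑ i ∈ C, w i * (if X i ω then (1:ℝ) else 0))
          + ∑ i ∈ D \ C, w i * (if X i ω then (1:ℝ) else 0)) := by
    funext ω
    rw [← Finset.sum_sdiff hCD, add_comm]
  have hfA : (fun ω => ∑ i ∈ Finset.univ \ A, w i * (if X i ω then (1:ℝ) else 0))
      = (fun ω => (w v * (if X v ω then (1:ℝ) else 0))
          + (∑ i ∈ C, w i * (if X i ω then (1:ℝ) else 0))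
          + ∑ i ∈ D \ C, w i * (if X i ω then (1:ℝ) else 0)) := by
    funext ω
    rw [hins A hvA, Finset.sum_insert hvD, ← Finset.sum_sdiff hCD]
    ring
  rw [hfB, hfD, hfA]
  have hvnotC : ∀ i ∈ C, i ∈ Finset.univ \ {v} := by
    intro i hi
    simp only [Finset.mem_sdiff, Finset.mem_univ, true_and, Finset.mem_singleton]
    intro h; subst h; exact hvC hi
  have hvnotDC : ∀ i ∈ D \ C, i ∈ Finset.univ \ {v} := by
    intro i hi
    simp only [Finset.mem_sdiff, Finset.mem_univ, true_and, Finset.mem_singleton]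
    intro h; subst h; exact hvD (Finset.mem_sdiff.1 hi).1
  have key := SM.ent_add_submodular hμ0 hμ1
    (fun ω => w v * (if X v ω then (1:ℝ) else 0))
    (fun ω => ∑ i ∈ C, w i * (if X i ω then (1:ℝ) else 0))
    (fun ω => ∑ i ∈ D \ C, w i * (if X i ω then (1:ℝ) else 0))
    (fun t a => SM.master_indep hμ1 hind (Finset.univ \ {v})
      (fun f => (∑ i ∈ C, w i * (if f i then (1:ℝ) else 0))
        + ∑ i ∈ D \ C, w i * (if f i then (1:ℝ) else 0))
      (fun f => w v * (if f v then (1:ℝ) else 0))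
      (fun f g h => by
        congr 1
        · exact Finset.sum_congr rfl fun i hi => by rw [h i (hvnotC i hi)]
        · exact Finset.sum_congr rfl fun i hi => by rw [h i (hvnotDC i hi)])
      (fun f g h => by rw [h v (by simp)])
      t a)
    (fun t a => SM.master_indep hμ1 hind (Finset.univ \ {v})
      (fun f => ∑ i ∈ C, w i * (if f i then (1:ℝ) else 0))
      (fun f => w v * (if f v then (1:ℝ) else 0))
      (fun f g h => Finset.sum_congr rfl fun i hi => by rw [h i (hvnotC i hi)])
      (fun f g h => by rw [h v (by simp)])
      t a)
    (fun x c => SM.master_indep hμ1 hind (insert v C)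
      (fun f => (w v * (if f v then (1:ℝ) else 0),
        w v * (if f v then (1:ℝ) else 0) + ∑ i ∈ C, w i * (if f i then (1:ℝ) else 0)))
      (fun f => ∑ i ∈ D \ C, w i * (if f i then (1:ℝ) else 0))
      (fun f g h => by
        have hv' : f v = g v := h v (Finset.mem_insert_self v C)
        have hC' : ∀ i ∈ C, f i = g i := fun i hi => h i (Finset.mem_insert_of_mem hi)
        rw [hv']
        congr 2
        exact Finset.sum_congr rfl fun i hi => by rw [hC' i hi])
      (fun f g h => Finset.sum_congr rfl fun i hi => by
        rw [h i (by
          simp only [Finset.mem_insert, not_or]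
          have hiD := Finset.mem_sdiff.1 hi
          refine ⟨fun hiv => ?_, hiD.2⟩
          · subst hiv; exact hvD hiD.1)])
      x c)
  linarith
end

section
/- For mutually independent discrete random variables Y_1, Y_2, Y_3 taking finitely many real values, the Shannon entropies satisfy H(Y_1 + Y_2) + H(Y_2 + Y_3) ≥ H(Y_1 + Y_2 + Y_3) + H(Y_2). -/
open Finset Real

/-- Mutual independence of three real-valued random variables on a finite space. -/
def Indep3 {Ω : Type} [Fintype Ω] (μ : Ω → ℝ) (Y₁ Y₂ Y₃ : Ω → ℝ) : Prop :=
  ∀ a b c : ℝ, pmass μ (fun ω => (Y₁ ω, Y₂ ω, Y₃ ω)) (a, b, c)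
    = pmass μ Y₁ a * pmass μ Y₂ b * pmass μ Y₃ c

section lemmas
variable {Ω : Type} [Fintype Ω] {μ : Ω → ℝ}

lemma pmass_nonneg (hμ0 : ∀ ω, 0 ≤ μ ω) {α : Type} [DecidableEq α] (Y : Ω → α) (a : α) :
    0 ≤ pmass μ Y a :=
  Finset.sum_nonneg fun ω _ => by by_cases h : Y ω = a <;> simp [h, hμ0 ω]

lemma le_pmass (hμ0 : ∀ ω, 0 ≤ μ ω) {α : Type} [DecidableEq α] (Y : Ω → α) (ω : Ω) :
    μ ω ≤ pmass μ Y (Y ω) := by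
  have := Finset.single_le_sum (f := fun ω' => if Y ω' = Y ω then μ ω' else 0)
    (fun ω' _ => by by_cases h : Y ω' = Y ω <;> simp [h, hμ0 ω']) (Finset.mem_univ ω)
  simpa [pmass] using this

lemma sum_pmass {α : Type} [DecidableEq α] (Y : Ω → α) :
    ∑ a ∈ Finset.univ.image Y, pmass μ Y a = ∑ ω, μ ω := by
  simp only [pmass]
  rw [Finset.sum_comm]
  apply Finset.sum_congr rfl
  intro ω _
  rw [Finset.sum_ite_eq (Finset.univ.image Y) (Y ω) (fun _ => μ ω)]
  simp

lemma ent_eq {α : Type} [DecidableEq α] (Y : Ω → α) :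
    ent μ Y = -∑ ω, μ ω * Real.logb 2 (pmass μ Y (Y ω)) := by
  rw [ent, neg_inj]
  have : ∀ a, pmass μ Y a * Real.logb 2 (pmass μ Y a)
      = ∑ ω, (if Y ω = a then μ ω * Real.logb 2 (pmass μ Y a) else 0) := by
    intro a
    rw [pmass, Finset.sum_mul]
    exact Finset.sum_congr rfl fun ω _ => by by_cases h : Y ω = a <;> simp [h]
  simp only [this]
  rw [Finset.sum_comm]
  apply Finset.sum_congr rfl
  intro ω _
  rw [Finset.sum_ite_eq (Finset.univ.image Y) (Y ω)
    (fun a => μ ω * Real.logb 2 (pmass μ Y a))]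
  simp

lemma pmass_congr {α β : Type} [DecidableEq α] [DecidableEq β]
    {Y : Ω → α} {Z : Ω → β} {y : α} {z : β} (h : ∀ ω, Y ω = y ↔ Z ω = z) :
    pmass μ Y y = pmass μ Z z := by
  apply Finset.sum_congr rfl
  intro ω _
  by_cases hh : Y ω = y
  · simp [hh, (h ω).mp hh]
  · have : ¬ Z ω = z := fun hz => hh ((h ω).mpr hz)
    simp [hh, this]

lemma pmass_comp_inj {α β : Type} [DecidableEq α] [DecidableEq β]
    {g : α → β} (hg : Function.Injective g) (Y : Ω → α) (a : α) :
    pmass μ (fun ω => g (Y ω)) (g a) = pmass μ Y a :=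
  pmass_congr fun ω => by simp [hg.eq_iff]

lemma ent_comp_inj {α β : Type} [DecidableEq α] [DecidableEq β]
    {g : α → β} (hg : Function.Injective g) (Y : Ω → α) :
    ent μ (fun ω => g (Y ω)) = ent μ Y := by
  rw [ent_eq, ent_eq, neg_inj]
  apply Finset.sum_congr rfl
  intro ω _
  rw [pmass_comp_inj hg]

lemma marg_fst {α β : Type} [DecidableEq α] [DecidableEq β]
    (A : Ω → α) (B : Ω → β) (y : β) :
    ∑ a ∈ Finset.univ.image A, pmass μ (fun ω => (A ω, B ω)) (a, y) = pmass μ B y := by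
  simp only [pmass]
  rw [Finset.sum_comm]
  apply Finset.sum_congr rfl
  intro ω _
  have : ∀ a, (if (A ω, B ω) = (a, y) then μ ω else 0)
      = if A ω = a then (if B ω = y then μ ω else 0) else 0 := by
    intro a
    by_cases h1 : A ω = a <;> by_cases h2 : B ω = y <;> simp [Prod.ext_iff, h1, h2]
  simp only [this]
  rw [Finset.sum_ite_eq (Finset.univ.image A) (A ω)
    (fun _ => if B ω = y then μ ω else 0)]
  simp

lemma marg_snd {α β : Type} [DecidableEq α] [DecidableEq β]
    (A : Ω → α) (B : Ω → β) (x : α) :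
    ∑ y ∈ Finset.univ.image B, pmass μ (fun ω => (A ω, B ω)) (x, y) = pmass μ A x := by
  simp only [pmass]
  rw [Finset.sum_comm]
  apply Finset.sum_congr rfl
  intro ω _
  have : ∀ y, (if (A ω, B ω) = (x, y) then μ ω else 0)
      = if B ω = y then (if A ω = x then μ ω else 0) else 0 := by
    intro y
    by_cases h1 : A ω = x <;> by_cases h2 : B ω = y <;> simp [Prod.ext_iff, h1, h2]
  simp only [this]
  rw [Finset.sum_ite_eq (Finset.univ.image B) (B ω)
    (fun _ => if A ω = x then μ ω else 0)]
  simp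

lemma ent_pair_indep (hμ0 : ∀ ω, 0 ≤ μ ω) {α β : Type} [DecidableEq α] [DecidableEq β]
    {A : Ω → α} {B : Ω → β}
    (h : ∀ a b, pmass μ (fun ω => (A ω, B ω)) (a, b) = pmass μ A a * pmass μ B b) :
    ent μ (fun ω => (A ω, B ω)) = ent μ A + ent μ B := by
  rw [ent_eq, ent_eq, ent_eq]
  have : ∀ ω, μ ω * Real.logb 2 (pmass μ (fun ω => (A ω, B ω)) (A ω, B ω))
      = μ ω * Real.logb 2 (pmass μ A (A ω)) + μ ω * Real.logb 2 (pmass μ B (B ω)) := by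
    intro ω
    rcases eq_or_lt_of_le (hμ0 ω) with h0 | h0
    · simp [← h0]
    · have hA : pmass μ A (A ω) ≠ 0 := ne_of_gt (lt_of_lt_of_le h0 (le_pmass hμ0 A ω))
      have hB : pmass μ B (B ω) ≠ 0 := ne_of_gt (lt_of_lt_of_le h0 (le_pmass hμ0 B ω))
      rw [h, Real.logb_mul hA hB, mul_add]
  rw [show (∑ ω, μ ω * Real.logb 2 (pmass μ (fun ω => (A ω, B ω)) ((fun ω => (A ω, B ω)) ω)))
      = ∑ ω, (μ ω * Real.logb 2 (pmass μ A (A ω)) + μ ω * Real.logb 2 (pmass μ B (B ω)))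
    from Finset.sum_congr rfl fun ω _ => this ω]
  rw [Finset.sum_add_distrib]
  ring

end lemmas

section submod
variable {Ω : Type} [Fintype Ω] {μ : Ω → ℝ}

lemma submod (hμ0 : ∀ ω, 0 ≤ μ ω) (hμ1 : ∑ ω, μ ω = 1)
    {α β γ : Type} [DecidableEq α] [DecidableEq β] [DecidableEq γ]
    (A : Ω → α) (B : Ω → β) (C : Ω → γ) :
    ent μ (fun ω => (A ω, B ω, C ω)) + ent μ B ≤
      ent μ (fun ω => (A ω, B ω)) + ent μ (fun ω => (B ω, C ω)) := by
  classical
  set K : α × β → ℝ := pmass μ (fun ω => (A ω, B ω)) with hK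
  set L : β × γ → ℝ := pmass μ (fun ω => (B ω, C ω)) with hL
  set J : α × β × γ → ℝ := pmass μ (fun ω => (A ω, B ω, C ω)) with hJ
  set P : β → ℝ := pmass μ B with hP
  set S : Finset Ω := Finset.univ.filter (fun ω => μ ω ≠ 0) with hS
  have hpos : ∀ ω ∈ S, 0 < μ ω := by
    intro ω hω
    rcases eq_or_lt_of_le (hμ0 ω) with h | h
    · exact absurd h.symm (by simpa [hS] using hω)
    · exact h
  -- restriction of any ω-sum to S
  have hrestrict : ∀ f : Ω → ℝ, ∑ ω ∈ S, μ ω * f ω = ∑ ω, μ ω * f ω := by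
    intro f
    apply Finset.sum_subset (Finset.subset_univ S)
    intro ω _ hω
    have : μ ω = 0 := by by_contra hne; exact hω (by simp [hS, hne])
    simp [this]
  have hSsum : ∑ ω ∈ S, μ ω = 1 := by
    have := hrestrict (fun _ => 1)
    simpa [hμ1] using this
  -- positivity of the four masses on S
  have hKpos : ∀ ω ∈ S, 0 < K (A ω, B ω) := fun ω hω =>
    lt_of_lt_of_le (hpos ω hω) (le_pmass hμ0 (fun ω => (A ω, B ω)) ω)
  have hLpos : ∀ ω ∈ S, 0 < L (B ω, C ω) := fun ω hω =>
    lt_of_lt_of_le (hpos ω hω) (le_pmass hμ0 (fun ω => (B ω, C ω)) ω)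
  have hJpos : ∀ ω ∈ S, 0 < J (A ω, B ω, C ω) := fun ω hω =>
    lt_of_lt_of_le (hpos ω hω) (le_pmass hμ0 (fun ω => (A ω, B ω, C ω)) ω)
  have hPpos : ∀ ω ∈ S, 0 < P (B ω) := fun ω hω =>
    lt_of_lt_of_le (hpos ω hω) (le_pmass hμ0 B ω)
  set F : α × β × γ → ℝ :=
    fun x => K (x.1, x.2.1) * L (x.2.1, x.2.2) / (J x * P x.2.1) with hF
  -- Step A : the weighted sum of F is at most 1
  have hgroup : ∑ ω ∈ S, μ ω * F (A ω, B ω, C ω)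
      = ∑ x ∈ S.image (fun ω => (A ω, B ω, C ω)), J x * F x := by
    rw [← Finset.sum_fiberwise_of_maps_to (g := fun ω => (A ω, B ω, C ω))
      (fun ω hω => Finset.mem_image_of_mem _ hω) (fun ω => μ ω * F (A ω, B ω, C ω))]
    apply Finset.sum_congr rfl
    intro x hx
    have : ∀ ω ∈ S.filter (fun ω => (A ω, B ω, C ω) = x),
        μ ω * F (A ω, B ω, C ω) = μ ω * F x := by
      intro ω hω
      rw [(Finset.mem_filter.mp hω).2]
    rw [Finset.sum_congr rfl this, ← Finset.sum_mul]
    congr 1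
    -- fiber mass equals J x
    rw [hJ, pmass, ← Finset.sum_filter]
    rw [show S.filter (fun ω => (A ω, B ω, C ω) = x)
        = (Finset.univ.filter (fun ω => (A ω, B ω, C ω) = x)).filter (fun ω => μ ω ≠ 0) by
      rw [hS, Finset.filter_comm]]
    exact Finset.sum_filter_ne_zero _
  have hJx : ∀ x ∈ S.image (fun ω => (A ω, B ω, C ω)), 0 < J x := by
    intro x hx
    obtain ⟨ω, hω, rfl⟩ := Finset.mem_image.mp hx
    exact hJpos ω hω
  have hstep : ∑ x ∈ S.image (fun ω => (A ω, B ω, C ω)), J x * F x ≤ 1 := by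
    have hterm : ∀ x ∈ S.image (fun ω => (A ω, B ω, C ω)),
        J x * F x = K (x.1, x.2.1) * L (x.2.1, x.2.2) / P x.2.1 := by
      intro x hx
      have hJne : J x ≠ 0 := ne_of_gt (hJx x hx)
      have hPne : P x.2.1 ≠ 0 := by
        obtain ⟨ω, hω, rfl⟩ := Finset.mem_image.mp hx
        exact ne_of_gt (hPpos ω hω)
      rw [hF]
      field_simp
    rw [Finset.sum_congr rfl hterm]
    have hsub : S.image (fun ω => (A ω, B ω, C ω)) ⊆
        (Finset.univ.image A) ×ˢ ((Finset.univ.image B) ×ˢ (Finset.univ.image C)) := by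
      intro x hx
      obtain ⟨ω, hω, rfl⟩ := Finset.mem_image.mp hx
      simp [Finset.mem_product]
    calc ∑ x ∈ S.image (fun ω => (A ω, B ω, C ω)),
            K (x.1, x.2.1) * L (x.2.1, x.2.2) / P x.2.1
        ≤ ∑ x ∈ (Finset.univ.image A) ×ˢ ((Finset.univ.image B) ×ˢ (Finset.univ.image C)),
            K (x.1, x.2.1) * L (x.2.1, x.2.2) / P x.2.1 := by
          apply Finset.sum_le_sum_of_subset_of_nonneg hsub
          intro x _ _
          exact div_nonneg (mul_nonneg (pmass_nonneg hμ0 _ _) (pmass_nonneg hμ0 _ _))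
            (pmass_nonneg hμ0 _ _)
      _ ≤ 1 := by
          rw [Finset.sum_product]
          simp only [Finset.sum_product]
          rw [Finset.sum_comm]
          have inner : ∀ b, ∑ a ∈ Finset.univ.image A, ∑ c ∈ Finset.univ.image C,
              K (a, b) * L (b, c) / P b ≤ P b := by
            intro b
            have hLsum : ∑ c ∈ Finset.univ.image C, L (b, c) = P b :=
              marg_snd B C b
            have hKsum : ∑ a ∈ Finset.univ.image A, K (a, b) = P b :=
              marg_fst A B b
            have h1 : ∀ a, ∑ c ∈ Finset.univ.image C, K (a, b) * L (b, c) / P b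
                = K (a, b) * P b / P b := by
              intro a
              rw [← Finset.sum_div, ← Finset.mul_sum, hLsum]
            rw [Finset.sum_congr rfl fun a _ => h1 a, ← Finset.sum_div, ← Finset.sum_mul,
              hKsum]
            rcases eq_or_ne (P b) 0 with h | h
            · simp [h, pmass_nonneg hμ0 B b]
            · rw [mul_div_assoc, div_self h, mul_one]
          calc ∑ b ∈ Finset.univ.image B, ∑ a ∈ Finset.univ.image A,
                  ∑ c ∈ Finset.univ.image C, K (a, b) * L (b, c) / P b
              ≤ ∑ b ∈ Finset.univ.image B, P b :=
                Finset.sum_le_sum fun b _ => inner b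
            _ = 1 := by rw [hP, sum_pmass, hμ1]
  have hF1 : ∑ ω ∈ S, μ ω * F (A ω, B ω, C ω) ≤ 1 := le_trans (le_of_eq hgroup) hstep
  -- Step B : log-sum inequality
  have hlog2 : (0:ℝ) < Real.log 2 := Real.log_pos (by norm_num)
  have hkey : ∑ ω ∈ S, μ ω * Real.logb 2 (F (A ω, B ω, C ω)) ≤ 0 := by
    have hFpos : ∀ ω ∈ S, 0 < F (A ω, B ω, C ω) := by
      intro ω hω
      exact div_pos (mul_pos (hKpos ω hω) (hLpos ω hω))
        (mul_pos (hJpos ω hω) (hPpos ω hω))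
    have hle : ∀ ω ∈ S, μ ω * Real.logb 2 (F (A ω, B ω, C ω))
        ≤ μ ω * ((F (A ω, B ω, C ω) - 1) / Real.log 2) := by
      intro ω hω
      apply mul_le_mul_of_nonneg_left _ (le_of_lt (hpos ω hω))
      rw [Real.logb]
      gcongr
      exact Real.log_le_sub_one_of_pos (hFpos ω hω)
    calc ∑ ω ∈ S, μ ω * Real.logb 2 (F (A ω, B ω, C ω))
        ≤ ∑ ω ∈ S, μ ω * ((F (A ω, B ω, C ω) - 1) / Real.log 2) :=
          Finset.sum_le_sum hle
      _ = ((∑ ω ∈ S, μ ω * F (A ω, B ω, C ω)) - ∑ ω ∈ S, μ ω) / Real.log 2 := by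
          rw [← Finset.sum_sub_distrib, Finset.sum_div]
          exact Finset.sum_congr rfl fun ω _ => by ring
      _ ≤ 0 := by
          rw [hSsum]
          apply div_nonpos_of_nonpos_of_nonneg _ (le_of_lt hlog2)
          linarith [hF1]
  -- Step C : expand the logarithm and conclude
  have hexpand : ∀ ω ∈ S, μ ω * Real.logb 2 (F (A ω, B ω, C ω))
      = μ ω * Real.logb 2 (K (A ω, B ω)) + μ ω * Real.logb 2 (L (B ω, C ω))
        - μ ω * Real.logb 2 (J (A ω, B ω, C ω)) - μ ω * Real.logb 2 (P (B ω)) := by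
    intro ω hω
    have hKne := ne_of_gt (hKpos ω hω)
    have hLne := ne_of_gt (hLpos ω hω)
    have hJne := ne_of_gt (hJpos ω hω)
    have hPne := ne_of_gt (hPpos ω hω)
    rw [hF]
    rw [Real.logb_div (by positivity) (by positivity), Real.logb_mul hKne hLne,
      Real.logb_mul hJne hPne]
    ring
  have hsum : ∑ ω ∈ S, μ ω * Real.logb 2 (K (A ω, B ω))
      + ∑ ω ∈ S, μ ω * Real.logb 2 (L (B ω, C ω))
      - ∑ ω ∈ S, μ ω * Real.logb 2 (J (A ω, B ω, C ω))
      - ∑ ω ∈ S, μ ω * Real.logb 2 (P (B ω)) ≤ 0 := by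
    have := Finset.sum_congr rfl hexpand
    rw [this] at hkey
    simp only [Finset.sum_sub_distrib, Finset.sum_add_distrib] at hkey
    linarith [hkey]
  rw [hrestrict (fun ω => Real.logb 2 (K (A ω, B ω))),
    hrestrict (fun ω => Real.logb 2 (L (B ω, C ω))),
    hrestrict (fun ω => Real.logb 2 (J (A ω, B ω, C ω))),
    hrestrict (fun ω => Real.logb 2 (P (B ω)))] at hsum
  rw [ent_eq, ent_eq, ent_eq, ent_eq]
  simp only [hK, hL, hJ, hP] at hsum
  linarith [hsum]
end submod


theorem stmt3 {Ω : Type} [Fintype Ω]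
    (μ : Ω → ℝ) (hμ0 : ∀ ω, 0 ≤ μ ω) (hμ1 : ∑ ω, μ ω = 1)
    (Y₁ Y₂ Y₃ : Ω → ℝ) (hind : Indep3 μ Y₁ Y₂ Y₃) :
    ent μ (fun ω => Y₁ ω + Y₂ ω) + ent μ (fun ω => Y₂ ω + Y₃ ω) ≥
      ent μ (fun ω => Y₁ ω + Y₂ ω + Y₃ ω) + ent μ Y₂ := by
  classical
  set p : ℝ → ℝ := pmass μ Y₁ with hp
  set q : ℝ → ℝ := pmass μ Y₂ with hq
  set r : ℝ → ℝ := pmass μ Y₃ with hr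
  set U : Ω → ℝ := fun ω => Y₁ ω + Y₂ ω with hU
  set V : Ω → ℝ := fun ω => Y₂ ω + Y₃ ω with hV
  set Sf : Ω → ℝ := fun ω => Y₁ ω + Y₂ ω + Y₃ ω with hSf
  have tot1 : ∑ a ∈ Finset.univ.image Y₁, p a = 1 := by rw [hp, sum_pmass, hμ1]
  have tot3 : ∑ c ∈ Finset.univ.image Y₃, r c = 1 := by rw [hr, sum_pmass, hμ1]
  -- pairwise distributions
  have P1 : ∀ b c, pmass μ (fun ω => (Y₂ ω, Y₃ ω)) (b, c) = q b * r c := by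
    intro b c
    have h := marg_fst (μ := μ) Y₁ (fun ω => (Y₂ ω, Y₃ ω)) (b, c)
    beta_reduce at h
    rw [← h]
    have h2 : ∀ a, pmass μ (fun ω => (Y₁ ω, Y₂ ω, Y₃ ω)) (a, (b, c))
        = p a * (q b * r c) := fun a => by rw [hind a b c, mul_assoc]
    rw [Finset.sum_congr rfl fun a _ => h2 a, ← Finset.sum_mul, tot1, one_mul]
  have P1' : ∀ a b, pmass μ (fun ω => (Y₁ ω, Y₂ ω)) (a, b) = p a * q b := by
    intro a b
    have h := marg_snd (μ := μ) (fun ω => (Y₁ ω, Y₂ ω)) Y₃ (a, b)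
    beta_reduce at h
    rw [← h]
    have h2 : ∀ c, pmass μ (fun ω => ((Y₁ ω, Y₂ ω), Y₃ ω)) ((a, b), c)
        = p a * q b * r c := by
      intro c
      rw [show pmass μ (fun ω => ((Y₁ ω, Y₂ ω), Y₃ ω)) ((a, b), c)
          = pmass μ (fun ω => (Y₁ ω, Y₂ ω, Y₃ ω)) (a, b, c) from
        pmass_congr fun ω => by simp only [Prod.ext_iff]; tauto]
      exact hind a b c
    rw [Finset.sum_congr rfl fun c _ => h2 c, ← Finset.mul_sum, tot3, mul_one]
  -- distribution of V
  have pV : ∀ v, pmass μ V v = ∑ b ∈ Finset.univ.image Y₂, q b * r (v - b) := by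
    intro v
    have h := marg_fst (μ := μ) Y₂ V v
    beta_reduce at h
    rw [← h]
    apply Finset.sum_congr rfl
    intro b _
    have hc : pmass μ (fun ω => (Y₂ ω, V ω)) (b, v)
        = pmass μ (fun ω => (Y₂ ω, Y₃ ω)) (b, v - b) := by
      apply pmass_congr
      intro ω
      simp only [hV, Prod.ext_iff]
      constructor
      · rintro ⟨h1, h2⟩; exact ⟨h1, by linarith⟩
      · rintro ⟨h1, h2⟩; exact ⟨h1, by linarith⟩
    rw [hc, P1]
  -- independence of Y₁ and V
  have P3 : ∀ a v, pmass μ (fun ω => (Y₁ ω, V ω)) (a, v) = p a * pmass μ V v := by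
    intro a v
    have h := marg_fst (μ := μ) Y₂ (fun ω => (Y₁ ω, V ω)) (a, v)
    beta_reduce at h
    rw [← h, pV v, Finset.mul_sum]
    apply Finset.sum_congr rfl
    intro b _
    have hc : pmass μ (fun ω => (Y₂ ω, Y₁ ω, V ω)) (b, a, v)
        = pmass μ (fun ω => (Y₁ ω, Y₂ ω, Y₃ ω)) (a, b, v - b) := by
      apply pmass_congr
      intro ω
      simp only [hV, Prod.ext_iff]
      constructor
      · rintro ⟨h1, h2, h3⟩; exact ⟨h2, h1, by linarith⟩
      · rintro ⟨h1, h2, h3⟩; exact ⟨h2, h1, by linarith⟩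
    rw [hc, hind]
    ring
  -- distribution of U
  have pU : ∀ u, pmass μ U u = ∑ b ∈ Finset.univ.image Y₂, p (u - b) * q b := by
    intro u
    have h := marg_fst (μ := μ) Y₂ U u
    beta_reduce at h
    rw [← h]
    apply Finset.sum_congr rfl
    intro b _
    have hc : pmass μ (fun ω => (Y₂ ω, U ω)) (b, u)
        = pmass μ (fun ω => (Y₁ ω, Y₂ ω)) (u - b, b) := by
      apply pmass_congr
      intro ω
      simp only [hU, Prod.ext_iff]
      constructor
      · rintro ⟨h1, h2⟩; exact ⟨by linarith, h1⟩
      · rintro ⟨h1, h2⟩; exact ⟨h2, by linarith⟩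
    rw [hc, P1']
  -- independence of U and Y₃
  have P4 : ∀ u c, pmass μ (fun ω => (U ω, Y₃ ω)) (u, c) = pmass μ U u * r c := by
    intro u c
    have h := marg_fst (μ := μ) Y₂ (fun ω => (U ω, Y₃ ω)) (u, c)
    beta_reduce at h
    rw [← h, pU u, Finset.sum_mul]
    apply Finset.sum_congr rfl
    intro b _
    have hc : pmass μ (fun ω => (Y₂ ω, U ω, Y₃ ω)) (b, u, c)
        = pmass μ (fun ω => (Y₁ ω, Y₂ ω, Y₃ ω)) (u - b, b, c) := by
      apply pmass_congr
      intro ω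
      simp only [hU, Prod.ext_iff]
      constructor
      · rintro ⟨h1, h2, h3⟩; exact ⟨by linarith, h1, h3⟩
      · rintro ⟨h1, h2, h3⟩; exact ⟨h2, by linarith, h3⟩
    rw [hc, hind]
  -- entropy identities
  have eA : ent μ (fun ω => (V ω, Sf ω)) = ent μ Y₁ + ent μ V := by
    have hg : Function.Injective (fun x : ℝ × ℝ => (x.2, x.1 + x.2)) := by
      rintro ⟨a, b⟩ ⟨c, d⟩ h
      simp only [Prod.ext_iff] at h ⊢
      obtain ⟨h1, h2⟩ := h
      exact ⟨by linarith, h1⟩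
    have h := ent_comp_inj (μ := μ) hg (fun ω => (Y₁ ω, V ω))
    simp only at h
    have e1 : (fun ω => (V ω, Y₁ ω + V ω)) = fun ω => (V ω, Sf ω) := by
      funext ω
      simp only [hV, hSf, Prod.mk.injEq]
      exact ⟨trivial, by ring⟩
    rw [e1] at h
    rw [h]
    exact ent_pair_indep hμ0 P3
  have eD : ent μ (fun ω => (Sf ω, Y₃ ω)) = ent μ U + ent μ Y₃ := by
    have hg : Function.Injective (fun x : ℝ × ℝ => (x.1 + x.2, x.2)) := by
      rintro ⟨a, b⟩ ⟨c, d⟩ h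
      simp only [Prod.ext_iff] at h ⊢
      obtain ⟨h1, h2⟩ := h
      exact ⟨by linarith, h2⟩
    have h := ent_comp_inj (μ := μ) hg (fun ω => (U ω, Y₃ ω))
    simp only at h
    have e1 : (fun ω => (U ω + Y₃ ω, Y₃ ω)) = fun ω => (Sf ω, Y₃ ω) := by
      funext ω
      simp only [hU, hSf, Prod.mk.injEq]
    rw [e1] at h
    rw [h]
    exact ent_pair_indep hμ0 P4
  have eT : ent μ (fun ω => (Y₁ ω, Y₂ ω, Y₃ ω)) = ent μ Y₁ + ent μ Y₂ + ent μ Y₃ := by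
    have h1 : ent μ (fun ω => (Y₂ ω, Y₃ ω)) = ent μ Y₂ + ent μ Y₃ :=
      ent_pair_indep hμ0 fun b c => P1 b c
    have h2 : ent μ (fun ω => (Y₁ ω, Y₂ ω, Y₃ ω))
        = ent μ Y₁ + ent μ (fun ω => (Y₂ ω, Y₃ ω)) := by
      apply ent_pair_indep hμ0 (B := fun ω => (Y₂ ω, Y₃ ω))
      rintro a ⟨b, c⟩
      rw [P1 b c, hind a b c, mul_assoc]
    rw [h2, h1]
    ring
  have eC : ent μ (fun ω => (V ω, Sf ω, Y₃ ω)) = ent μ Y₁ + ent μ Y₂ + ent μ Y₃ := by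
    have hg : Function.Injective
        (fun x : ℝ × ℝ × ℝ => (x.2.1 + x.2.2, x.1 + x.2.1 + x.2.2, x.2.2)) := by
      rintro ⟨a, b, c⟩ ⟨a', b', c'⟩ h
      simp only [Prod.ext_iff] at h ⊢
      obtain ⟨h1, h2, h3⟩ := h
      exact ⟨by linarith, by linarith, h3⟩
    have h := ent_comp_inj (μ := μ) hg (fun ω => (Y₁ ω, Y₂ ω, Y₃ ω))
    simp only at h
    have e1 : (fun ω => (Y₂ ω + Y₃ ω, Y₁ ω + Y₂ ω + Y₃ ω, Y₃ ω))
        = fun ω => (V ω, Sf ω, Y₃ ω) := by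
      funext ω
      simp only [hV, hSf, Prod.mk.injEq]
    rw [e1] at h
    rw [h, eT]
  have key := submod hμ0 hμ1 V Sf Y₃
  rw [eA, eD, eC] at key
  linarith [key]
end

section
/- In the path setting with single source at node 0 and homogeneous infection probability λ ∈ (0,1), let 0 < i_1 < i_2 < … < i_k and g_j = i_j − i_{j−1} (with i_0 = 0). The infection indicators satisfy the chain decomposition H(X_{i_1},…,X_{i_k}) = h(λ^{g_1}) + λ^{g_1} h(λ^{g_2}) + λ^{g_1+g_2} h(λ^{g_3}) + … + λ^{g_1+…+g_{k−1}} h(λ^{g_k}), where h(p) = −p log p − (1−p) log(1−p) is the binary entropy function. -/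
open Finset Real

lemma card_filter_lt_fin (n m : ℕ) (h : m ≤ n) :
    ((Finset.univ : Finset (Fin n)).filter (fun x => x.1 < m)).card = m := by
  have he : (Finset.univ : Finset (Fin n)).filter (fun x => x.1 < m)
      = Finset.map (Fin.castLEEmb h) Finset.univ := by
    ext x
    simp only [Finset.mem_filter, Finset.mem_univ, true_and, Finset.mem_map,
      Fin.castLEEmb, Function.Embedding.coeFn_mk]
    constructor
    · intro hx; exact ⟨⟨x.1, hx⟩, Fin.ext rfl⟩
    · rintro ⟨y, _, rfl⟩; exact y.2
  rw [he, Finset.card_map, Finset.card_univ, Fintype.card_fin]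

lemma pmass_sub {Ω : Type} [Fintype Ω] (μ : Ω → ℝ) (Za Zb : Ω → Bool)
    (h : ∀ ω, Zb ω = true → Za ω = true) :
    pmass μ (fun ω => Za ω && !Zb ω) true = pmass μ Za true - pmass μ Zb true := by
  unfold pmass
  rw [← Finset.sum_sub_distrib]
  refine Finset.sum_congr rfl fun ω _ => ?_
  cases hb : Zb ω
  · cases ha : Za ω <;> simp [ha, hb]
  · have := h ω hb; simp [this, hb]

lemma pmass_bool_add {Ω : Type} [Fintype Ω] (μ : Ω → ℝ) (Z : Ω → Bool) :
    pmass μ Z true + pmass μ Z false = ∑ ω, μ ω := by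
  unfold pmass
  rw [← Finset.sum_add_distrib]
  refine Finset.sum_congr rfl fun ω _ => ?_
  cases h : Z ω <;> simp [h]

lemma pmass_cyl {Ω : Type} [Fintype Ω] (μ : Ω → ℝ) (hμ1 : ∑ ω, μ ω = 1)
    (n : ℕ) (lam : ℝ) (E : Fin n → Ω → Bool) (hind : MutIndep μ E)
    (hber : ∀ j, pmass μ (E j) true = lam) (m : ℕ) (hm : m ≤ n) :
    pmass μ (fun ω => decide (∀ e : Fin n, (e : ℕ) < m → E e ω = true)) true = lam ^ m := by
  classical
  set S : Finset (Fin n → Bool) :=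
    Finset.univ.filter (fun s => ∀ e : Fin n, (e : ℕ) < m → s e = true) with hS
  have step1 : pmass μ (fun ω => decide (∀ e : Fin n, (e : ℕ) < m → E e ω = true)) true
      = ∑ s ∈ S, pmass μ (fun ω i => E i ω) s := by
    unfold pmass
    rw [Finset.sum_comm]
    refine Finset.sum_congr rfl fun ω _ => ?_
    rw [Finset.sum_ite_eq S (fun i => E i ω) (fun _ => μ ω)]
    by_cases hω : ∀ e : Fin n, (e : ℕ) < m → E e ω = true <;>
      simp [hS, hω]
  rw [step1]
  have step2 : ∀ s ∈ S, pmass μ (fun ω i => E i ω) s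
      = ∏ e : Fin n, (if (e : ℕ) < m ∧ s e = false then 0 else pmass μ (E e) (s e)) := by
    intro s hs
    rw [hind s]
    refine Finset.prod_congr rfl fun e _ => ?_
    have : ¬((e : ℕ) < m ∧ s e = false) := by
      rintro ⟨h1, h2⟩
      rw [hS] at hs
      simp only [Finset.mem_filter] at hs
      rw [hs.2 e h1] at h2; exact Bool.noConfusion h2
    rw [if_neg this]
  have step2' : ∑ s ∈ S, pmass μ (fun ω i => E i ω) s
      = ∑ s ∈ S, ∏ e : Fin n, (if (e : ℕ) < m ∧ s e = false then 0 else pmass μ (E e) (s e)) :=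
    Finset.sum_congr rfl step2
  rw [step2']
  have step3 : ∑ s ∈ S, ∏ e : Fin n, (if (e : ℕ) < m ∧ s e = false then 0 else pmass μ (E e) (s e))
      = ∑ s : Fin n → Bool, ∏ e : Fin n, (if (e : ℕ) < m ∧ s e = false then 0 else pmass μ (E e) (s e)) := by
    refine Finset.sum_subset (Finset.subset_univ S) ?_
    intro s _ hs
    rw [hS] at hs
    simp only [Finset.mem_filter, Finset.mem_univ, true_and, not_forall] at hs
    obtain ⟨e, he, hse⟩ := hs
    refine Finset.prod_eq_zero (Finset.mem_univ e) ?_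
    rw [if_pos ⟨he, by simpa using hse⟩]
  rw [step3]
  have step4 : ∑ s : Fin n → Bool, ∏ e : Fin n, (if (e : ℕ) < m ∧ s e = false then 0 else pmass μ (E e) (s e))
      = ∏ e : Fin n, ∑ b : Bool, (if (e : ℕ) < m ∧ b = false then 0 else pmass μ (E e) b) := by
    rw [Finset.prod_univ_sum (fun _ => (Finset.univ : Finset Bool))]
    rw [Fintype.piFinset_univ]
  rw [step4]
  have step5 : ∀ e : Fin n, (∑ b : Bool, (if (e : ℕ) < m ∧ b = false then 0 else pmass μ (E e) b))
      = if (e : ℕ) < m then lam else 1 := by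
    intro e
    by_cases he : (e : ℕ) < m
    · simp [he, hber e]
    · have h1 := pmass_bool_add μ (E e)
      rw [hμ1] at h1
      simp only [he, false_and, if_false, if_neg]
      simp [Fintype.sum_bool]
      linarith [hber e]
  have step5' : (∏ e : Fin n, ∑ b : Bool, (if (e : ℕ) < m ∧ b = false then 0 else pmass μ (E e) b))
      = ∏ e : Fin n, (if (e : ℕ) < m then lam else 1) :=
    Finset.prod_congr rfl (fun e _ => step5 e)
  rw [step5']
  rw [Finset.prod_ite, Finset.prod_const, Finset.prod_const, one_pow, mul_one,
    card_filter_lt_fin n m hm]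

def stairF (k : ℕ) : Fin (k+1) → (Fin k → Bool) := fun m j => decide (j.1 < m.1)

noncomputable def Aseq (lam : ℝ) (k : ℕ) (i : Fin k → ℕ) : ℕ → ℝ :=
  fun t => if h : 0 < t ∧ t ≤ k then lam ^ (i ⟨t-1, by omega⟩) else if t = 0 then 1 else 0

lemma stairF_inj (k : ℕ) : Function.Injective (stairF k) := by
  have key : ∀ a b : Fin (k+1), a.1 < b.1 → stairF k a ≠ stairF k b := by
    intro a b hab h
    have ha : a.1 < k := lt_of_lt_of_le hab (Nat.lt_succ_iff.mp b.2)
    have := congrFun h ⟨a.1, ha⟩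
    simp only [stairF, decide_eq_decide] at this
    omega
  intro a b h
  rcases lt_trichotomy a.1 b.1 with hc | hc | hc
  · exact absurd h (key a b hc)
  · exact Fin.ext hc
  · exact absurd h.symm (key b a hc)

lemma antitone_bool_eq_stair {k : ℕ} (b : Fin k → Bool)
    (hb : ∀ j j' : Fin k, j.1 ≤ j'.1 → b j' = true → b j = true) :
    ∃ m : Fin (k+1), b = stairF k m := by
  classical
  set c := (Finset.univ.filter (fun j : Fin k => b j = true)).card with hc
  have hck : c ≤ k := le_trans (Finset.card_filter_le _ _) (by simp)
  refine ⟨⟨c, by omega⟩, ?_⟩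
  funext j
  by_cases hj : b j = true
  · have hsub : Finset.univ.filter (fun x : Fin k => x.1 < j.1 + 1)
        ⊆ Finset.univ.filter (fun x : Fin k => b x = true) := by
      intro x hx
      simp only [Finset.mem_filter, Finset.mem_univ, true_and] at hx ⊢
      exact hb x j (by omega) hj
    have hcard : j.1 + 1 ≤ c := by
      rw [hc, ← card_filter_lt_fin k (j.1+1) (by omega)]
      exact Finset.card_le_card hsub
    rw [hj]
    simp only [stairF]
    symm
    rw [decide_eq_true_eq]
    omega
  · have hsub : Finset.univ.filter (fun x : Fin k => b x = true)
        ⊆ Finset.univ.filter (fun x : Fin k => x.1 < j.1) := by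
      intro x hx
      simp only [Finset.mem_filter, Finset.mem_univ, true_and] at hx ⊢
      by_contra hxx
      exact hj (hb j x (by omega) hx)
    have hcard : c ≤ j.1 := by
      rw [hc, ← card_filter_lt_fin k j.1 (le_of_lt j.2)]
      exact Finset.card_le_card hsub
    have hbj : b j = false := by
      cases hbb : b j
      · rfl
      · exact absurd hbb hj
    rw [hbj]
    simp only [stairF]
    symm
    rw [decide_eq_false_iff_not]
    omega

lemma binEnt_split (x y : ℝ) (hy : 0 < y) (hxy : y < x) :
    x * binEnt (y / x) = x * Real.logb 2 x - y * Real.logb 2 y - (x - y) * Real.logb 2 (x - y) := by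
  have hx : 0 < x := hy.trans hxy
  have hxy' : 0 < x - y := by linarith
  unfold binEnt
  have h1 : Real.logb 2 (y / x) = Real.logb 2 y - Real.logb 2 x := Real.logb_div hy.ne' hx.ne'
  have h2 : (1 : ℝ) - y / x = (x - y) / x := by field_simp
  rw [h1, h2, Real.logb_div hxy'.ne' hx.ne']
  field_simp
  ring

lemma pmass_stair {Ω : Type} [Fintype Ω] (μ : Ω → ℝ) (hμ1 : ∑ ω, μ ω = 1)
    (n : ℕ) (lam : ℝ) (E : Fin n → Ω → Bool) (hind : MutIndep μ E)
    (hber : ∀ j, pmass μ (E j) true = lam)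
    (k : ℕ) (i : Fin k → ℕ) (hmono : StrictMono i)
    (hpos : ∀ j, 0 < i j) (hn : ∀ j, i j ≤ n) (m : Fin (k+1)) :
    pmass μ (fun ω (j : Fin k) => decide (∀ e : Fin n, (e : ℕ) < i j → E e ω = true)) (stairF k m)
      = Aseq lam k i m.1 - Aseq lam k i (m.1 + 1) := by
  classical
  set Z : ℕ → Ω → Bool := fun c ω => decide (∀ e : Fin n, (e : ℕ) < c → E e ω = true) with hZ
  have hZmono : ∀ a b : ℕ, a ≤ b → ∀ ω, Z b ω = true → Z a ω = true := by
    intro a b hab ω h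
    simp only [hZ, decide_eq_true_eq] at h ⊢
    exact fun e he => h e (lt_of_lt_of_le he hab)
  have hZp : ∀ c : ℕ, c ≤ n → pmass μ (Z c) true = lam ^ c := fun c hc =>
    pmass_cyl μ hμ1 n lam E hind hber c hc
  have hmk : m.1 ≤ k := Nat.lt_succ_iff.mp m.2
  set lo : ℕ := if h : 0 < m.1 ∧ m.1 ≤ k then i ⟨m.1 - 1, by omega⟩ else 0 with hlo
  set Zhi : Ω → Bool := fun ω => if h : m.1 < k then Z (i ⟨m.1, h⟩) ω else false with hZhi
  have himp : ∀ ω, Zhi ω = true → Z lo ω = true := by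
    intro ω h
    rw [hZhi] at h
    by_cases hk : m.1 < k
    · simp only [dif_pos hk] at h
      refine hZmono lo (i ⟨m.1, hk⟩) ?_ ω h
      rw [hlo]
      by_cases h0 : 0 < m.1 ∧ m.1 ≤ k
      · rw [dif_pos h0]
        exact le_of_lt (hmono (by simp only [Fin.mk_lt_mk]; omega))
      · rw [dif_neg h0]; exact Nat.zero_le _
    · simp only [dif_neg hk] at h; exact absurd h (by simp)
  have hiff : ∀ ω, ((fun j : Fin k => Z (i j) ω) = stairF k m) ↔ ((Z lo ω && !Zhi ω) = true) := by
    intro ω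
    rw [funext_iff, Bool.and_eq_true, Bool.not_eq_true']
    constructor
    · intro h
      constructor
      · by_cases h0 : 0 < m.1
        · have hlt : m.1 - 1 < k := by omega
          have hj := h ⟨m.1 - 1, hlt⟩
          simp only [stairF] at hj
          rw [show (decide ((⟨m.1 - 1, hlt⟩ : Fin k).1 < m.1)) = true from
            decide_eq_true (by simp only []; omega)] at hj
          rw [hlo, dif_pos ⟨h0, hmk⟩]
          exact hj
        · have hl0 : lo = 0 := by rw [hlo, dif_neg (by omega)]
          rw [hl0, hZ]
          apply decide_eq_true
          intro e he
          omega
      · rw [hZhi]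
        by_cases hk : m.1 < k
        · simp only [dif_pos hk]
          have hj := h ⟨m.1, hk⟩
          simp only [stairF] at hj
          rw [show (decide ((⟨m.1, hk⟩ : Fin k).1 < m.1)) = false from
            decide_eq_false (by simp only []; omega)] at hj
          exact hj
        · simp only [dif_neg hk]
    · rintro ⟨h1, h2⟩ j
      simp only [stairF]
      by_cases hj : j.1 < m.1
      · rw [show decide (j.1 < m.1) = true from decide_eq_true hj]
        refine hZmono (i j) lo ?_ ω h1
        rw [hlo, dif_pos ⟨by omega, hmk⟩]
        exact hmono.monotone (show j ≤ ⟨m.1 - 1, by omega⟩ from by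
          simp only [Fin.le_def]; omega)
      · have hmlt : m.1 < k := lt_of_le_of_lt (by omega : m.1 ≤ j.1) j.2
        have hz : Z (i ⟨m.1, hmlt⟩) ω = false := by rw [hZhi] at h2; simp only [dif_pos hmlt] at h2; exact h2
        rw [show decide (j.1 < m.1) = false from decide_eq_false hj]
        cases hc : Z (i j) ω
        · rfl
        · exact absurd (hZmono (i ⟨m.1, hmlt⟩) (i j)
            (hmono.monotone (by simp only [Fin.le_def]; omega)) ω hc) (by rw [hz]; simp)
  have hev : pmass μ (fun ω (j : Fin k) => decide (∀ e : Fin n, (e : ℕ) < i j → E e ω = true)) (stairF k m)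
      = pmass μ (fun ω => Z lo ω && !Zhi ω) true := by
    unfold pmass
    refine Finset.sum_congr rfl fun ω _ => ?_
    exact if_congr (hiff ω) rfl rfl
  rw [hev, pmass_sub μ _ _ himp]
  have hlon : lo ≤ n := by
    rw [hlo]
    by_cases h0 : 0 < m.1 ∧ m.1 ≤ k
    · rw [dif_pos h0]; exact hn _
    · rw [dif_neg h0]; exact Nat.zero_le _
  congr 1
  · rw [hZp lo hlon, hlo]
    simp only [Aseq]
    by_cases h0 : 0 < m.1 ∧ m.1 ≤ k
    · rw [dif_pos h0, dif_pos h0]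
    · rw [dif_neg h0, dif_neg h0, if_pos (by omega : m.1 = 0), pow_zero]
  · by_cases hk : m.1 < k
    · have hze : Zhi = Z (i ⟨m.1, hk⟩) := by funext ω; rw [hZhi]; simp only [dif_pos hk]
      rw [hze, hZp _ (hn _)]
      simp only [Aseq]
      rw [dif_pos ⟨Nat.succ_pos _, by omega⟩]
      congr 2
    · have hze : Zhi = fun _ => false := by funext ω; rw [hZhi]; simp only [dif_neg hk]
      rw [hze]
      have hp0 : pmass μ (fun _ : Ω => false) true = 0 := by unfold pmass; simp
      rw [hp0]
      simp only [Aseq]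
      rw [dif_neg (by omega), if_neg (by omega)]

theorem stmt5 {Ω : Type} [Fintype Ω]
    (μ : Ω → ℝ) (hμ0 : ∀ ω, 0 ≤ μ ω) (hμ1 : ∑ ω, μ ω = 1)
    (n : ℕ) (lam : ℝ) (hlam : 0 < lam ∧ lam < 1)
    (E : Fin n → Ω → Bool) (hind : MutIndep μ E)
    (hber : ∀ j, pmass μ (E j) true = lam)
    (k : ℕ) (i : Fin k → ℕ) (hmono : StrictMono i)
    (hpos : ∀ j, 0 < i j) (hn : ∀ j, i j ≤ n) :
    ent μ (fun ω (j : Fin k) =>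
        decide (∀ e : Fin n, (e : ℕ) < i j → E e ω = true))
      = ∑ j : Fin k,
          lam ^ (if hj : 0 < j.1 then i ⟨j.1 - 1, by omega⟩ else 0) *
            binEnt (lam ^ (i j - (if hj : 0 < j.1 then i ⟨j.1 - 1, by omega⟩ else 0))) := by
  classical
  set Y : Ω → (Fin k → Bool) :=
    fun ω (j : Fin k) => decide (∀ e : Fin n, (e : ℕ) < i j → E e ω = true) with hY
  have hYanti : ∀ ω, ∀ j j' : Fin k, j.1 ≤ j'.1 → Y ω j' = true → Y ω j = true := by
    intro ω j j' hle h
    simp only [hY, decide_eq_true_eq] at h ⊢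
    intro e he
    exact h e (lt_of_lt_of_le he (hmono.monotone (Fin.le_def.mpr hle)))
  have himg : Finset.univ.image Y ⊆ Finset.univ.image (stairF k) := by
    intro s hs
    simp only [Finset.mem_image, Finset.mem_univ, true_and] at hs ⊢
    obtain ⟨ω, rfl⟩ := hs
    obtain ⟨m, hm⟩ := antitone_bool_eq_stair (Y ω) (hYanti ω)
    exact ⟨m, hm.symm⟩
  have hstep : ent μ Y = -∑ m : Fin (k+1),
      (Aseq lam k i m.1 - Aseq lam k i (m.1+1)) *
        Real.logb 2 (Aseq lam k i m.1 - Aseq lam k i (m.1+1)) := by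
    unfold ent
    congr 1
    rw [Finset.sum_subset himg (fun s _ hs => ?_)]
    · rw [Finset.sum_image (fun a _ b _ h => stairF_inj k h)]
      refine Finset.sum_congr rfl fun m _ => ?_
      rw [hY, pmass_stair μ hμ1 n lam E hind hber k i hmono hpos hn m]
    · have hz : pmass μ Y s = 0 := by
        unfold pmass
        refine Finset.sum_eq_zero fun ω _ => ?_
        rw [if_neg]
        intro hc
        exact hs (Finset.mem_image.mpr ⟨ω, Finset.mem_univ ω, hc⟩)
      rw [hz, zero_mul]
  have hlam0 := hlam.1
  have hlam1 := hlam.2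
  have hApos : ∀ t, t ≤ k → 0 < Aseq lam k i t := by
    intro t ht
    simp only [Aseq]
    by_cases h0 : 0 < t ∧ t ≤ k
    · rw [dif_pos h0]; exact pow_pos hlam0 _
    · rw [dif_neg h0, if_pos (by omega)]; norm_num
  have hAdec : ∀ t, t < k → Aseq lam k i (t+1) < Aseq lam k i t := by
    intro t ht
    simp only [Aseq]
    rw [dif_pos ⟨Nat.succ_pos _, by omega⟩]
    by_cases h0 : 0 < t ∧ t ≤ k
    · rw [dif_pos h0]
      exact pow_lt_pow_right_of_lt_one₀ hlam0 hlam1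
        (hmono (show (⟨t-1, by omega⟩ : Fin k) < ⟨t+1-1, by omega⟩ from by
          simp only [Fin.mk_lt_mk]; omega))
    · rw [dif_neg h0, if_pos (by omega)]
      refine pow_lt_one₀ hlam0.le hlam1 ?_
      have := hpos ⟨t+1-1, by omega⟩
      omega
  have hAtop : Aseq lam k i (k+1) = 0 := by
    simp only [Aseq]; rw [dif_neg (by omega), if_neg (by omega)]
  have hA0 : Aseq lam k i 0 = 1 := by
    simp only [Aseq]; rw [dif_neg (by omega)]; norm_num
  have hRHS : ∀ j : Fin k,
      lam ^ (if hj : 0 < j.1 then i ⟨j.1 - 1, by omega⟩ else 0) *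
        binEnt (lam ^ (i j - (if hj : 0 < j.1 then i ⟨j.1 - 1, by omega⟩ else 0)))
      = Aseq lam k i j.1 * binEnt (Aseq lam k i (j.1+1) / Aseq lam k i j.1) := by
    intro j
    have hj1 : Aseq lam k i (j.1+1) = lam ^ (i j) := by
      simp only [Aseq]
      rw [dif_pos ⟨Nat.succ_pos _, by omega⟩]
      congr 2
    by_cases h0 : 0 < j.1
    · rw [dif_pos h0]
      have hj0 : Aseq lam k i j.1 = lam ^ (i ⟨j.1-1, by omega⟩) := by
        simp only [Aseq]; rw [dif_pos ⟨h0, le_of_lt j.2⟩]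
      rw [hj0, hj1, pow_sub₀ lam (ne_of_gt hlam0)
        (le_of_lt (hmono (show (⟨j.1-1, by omega⟩ : Fin k) < j from by
          simp only [Fin.lt_def]; omega))), div_eq_mul_inv]
    · rw [dif_neg h0]
      have hj0 : Aseq lam k i j.1 = 1 := by
        have hj00 : j.1 = 0 := by omega
        rw [hj00, hA0]
      rw [hj0, hj1]
      simp
  rw [hstep]
  have hR : (∑ j : Fin k,
      lam ^ (if hj : 0 < j.1 then i ⟨j.1 - 1, by omega⟩ else 0) *
        binEnt (lam ^ (i j - (if hj : 0 < j.1 then i ⟨j.1 - 1, by omega⟩ else 0))))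
      = ∑ j : Fin k, Aseq lam k i j.1 * binEnt (Aseq lam k i (j.1+1) / Aseq lam k i j.1) :=
    Finset.sum_congr rfl fun j _ => hRHS j
  rw [hR]
  rw [Fin.sum_univ_eq_sum_range (fun t => (Aseq lam k i t - Aseq lam k i (t+1)) *
    Real.logb 2 (Aseq lam k i t - Aseq lam k i (t+1))) (k+1)]
  rw [Fin.sum_univ_eq_sum_range (fun t => Aseq lam k i t *
    binEnt (Aseq lam k i (t+1) / Aseq lam k i t)) k]
  have hbody : ∀ t ∈ Finset.range k, Aseq lam k i t * binEnt (Aseq lam k i (t+1) / Aseq lam k i t)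
      = (Aseq lam k i t * Real.logb 2 (Aseq lam k i t)
          - Aseq lam k i (t+1) * Real.logb 2 (Aseq lam k i (t+1)))
        - (Aseq lam k i t - Aseq lam k i (t+1)) *
            Real.logb 2 (Aseq lam k i t - Aseq lam k i (t+1)) := by
    intro t ht
    rw [Finset.mem_range] at ht
    have h := binEnt_split (Aseq lam k i t) (Aseq lam k i (t+1))
      (hApos (t+1) (by omega)) (hAdec t ht)
    linarith
  rw [Finset.sum_congr rfl hbody]
  rw [Finset.sum_sub_distrib,
    Finset.sum_range_sub' (fun t => Aseq lam k i t * Real.logb 2 (Aseq lam k i t)) k]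
  rw [Finset.sum_range_succ, hAtop, hA0]
  simp only [Real.logb_one, sub_zero, mul_zero, one_mul]
  ring
end

section
/- Let λ ∈ (0,1), k ≥ 1, and define F(g_1,…,g_k) = ∑_{j=1}^k λ^{g_1+…+g_{j−1}} h(λ^{g_j}) for real g_j ≥ 0, where h is the binary entropy function with base-2 logarithm. Then F attains its maximum over [0,∞)^k at g_j = log((k+1−j)/(k+2−j)) / log λ for j = 1,…,k, i.e., at the point where λ^{g_j} = (k+1−j)/(k+2−j). -/
open Finset Real

lemma rpow_sum_eq_prod (lam : ℝ) (hlam : 0 < lam) {ι : Type*} (s : Finset ι) (g : ι → ℝ) :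
    lam ^ (∑ m ∈ s, g m) = ∏ m ∈ s, lam ^ (g m) := by
  rw [Real.rpow_def_of_pos hlam, Finset.mul_sum, Real.exp_sum]
  exact Finset.prod_congr rfl (fun m _ => (Real.rpow_def_of_pos hlam _).symm)

lemma key (c x : ℝ) (hc : 1 ≤ c) (hx0 : 0 ≤ x) (hx1 : x ≤ 1) :
    binEnt x + x * Real.logb 2 c ≤ Real.logb 2 (c + 1) := by
  have hc0 : (0:ℝ) < c := lt_of_lt_of_le one_pos hc
  have hc1 : (0:ℝ) < c + 1 := by linarith
  rcases eq_or_lt_of_le hx0 with h0 | h0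
  · simp only [binEnt, ← h0]
    simp [Real.logb]
    have : (0:ℝ) ≤ Real.log (c+1) := Real.log_nonneg (by linarith)
    positivity
  rcases eq_or_lt_of_le hx1 with h1 | h1
  · subst h1
    simp [binEnt, Real.logb]
    rw [div_le_div_iff_of_pos_right (Real.log_pos one_lt_two)]
    exact Real.log_le_log hc0 (by linarith)
  -- interior
  have hlog2 : (0:ℝ) < Real.log 2 := Real.log_pos one_lt_two
  have hx1' : (0:ℝ) < 1 - x := by linarith
  have hA : Real.log (c / (x*(c+1))) = Real.log c - Real.log x - Real.log (c+1) := by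
    rw [Real.log_div (ne_of_gt hc0) (by positivity), Real.log_mul (ne_of_gt h0) (ne_of_gt hc1)]
    ring
  have hB : Real.log (1 / ((1-x)*(c+1))) = -Real.log (1-x) - Real.log (c+1) := by
    rw [Real.log_div one_ne_zero (by positivity), Real.log_mul (ne_of_gt hx1') (ne_of_gt hc1),
      Real.log_one]
    ring
  have h1' : Real.log (c / (x*(c+1))) ≤ c/(x*(c+1)) - 1 :=
    Real.log_le_sub_one_of_pos (by positivity)
  have h2' : Real.log (1 / ((1-x)*(c+1))) ≤ 1/((1-x)*(c+1)) - 1 :=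
    Real.log_le_sub_one_of_pos (by positivity)
  have h3 : x*(c/(x*(c+1)) - 1) + (1-x)*(1/((1-x)*(c+1)) - 1) = 0 := by
    field_simp
    ring
  have main : (-(x*Real.log x) - (1-x)*Real.log (1-x)) + x*Real.log c ≤ Real.log (c+1) := by
    nlinarith [mul_le_mul_of_nonneg_left h1' hx0, mul_le_mul_of_nonneg_left h2' (le_of_lt hx1')]
  have : binEnt x + x * Real.logb 2 c
      = ((-(x*Real.log x) - (1-x)*Real.log (1-x)) + x*Real.log c) / Real.log 2 := by
    simp only [binEnt, Real.logb]; ring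
  rw [this, Real.logb, div_le_div_iff_of_pos_right hlog2]  -- guess name
  exact main

lemma upper (k : ℕ) (x : ℕ → ℝ) (hx : ∀ j, 0 < x j ∧ x j ≤ 1) :
    ∑ j ∈ Finset.range k, (∏ m ∈ Finset.range j, x m) * binEnt (x j)
      ≤ Real.logb 2 (k + 1) := by
  induction k generalizing x with
  | zero => simp
  | succ n ih =>
    rw [Finset.sum_range_succ']
    have hrw : ∀ i, (∏ m ∈ Finset.range (i+1), x m) * binEnt (x (i+1))
        = x 0 * ((∏ m ∈ Finset.range i, x (m+1)) * binEnt (x (i+1))) := by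
      intro i; rw [Finset.prod_range_succ']; ring
    simp only [hrw, Finset.prod_range_zero, one_mul]
    rw [← Finset.mul_sum]
    have hih := ih (fun m => x (m+1)) (fun m => hx (m+1))
    have hx0 := hx 0
    have hlog : (0:ℝ) ≤ Real.logb 2 (n + 1) :=
      Real.logb_nonneg one_lt_two (by push_cast; linarith)
    have h1 : x 0 * (∑ i ∈ Finset.range n, (∏ m ∈ Finset.range i, x (m+1)) * binEnt (x (i+1)))
        ≤ x 0 * Real.logb 2 (n + 1) :=
      mul_le_mul_of_nonneg_left hih (le_of_lt hx0.1)
    have h2 := key ((n:ℝ)+1) (x 0) (by push_cast; linarith) (le_of_lt hx0.1) hx0.2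
    push_cast
    push_cast at h2
    linarith

lemma prod_frac (k : ℕ) : ∀ t : ℕ, t ≤ k →
    ∏ m ∈ Finset.range t, (((k : ℝ) - m) / ((k : ℝ) + 1 - m)) = ((k:ℝ) + 1 - t)/((k:ℝ)+1) := by
  intro t
  induction t with
  | zero =>
    intro _
    have h2 : (k:ℝ) + 1 ≠ 0 := by positivity
    simp [div_self h2]
  | succ n ih =>
    intro ht
    have hn : (n:ℝ) ≤ k := by exact_mod_cast le_of_lt (Nat.lt_of_succ_le ht)
    rw [Finset.prod_range_succ, ih (le_of_lt (Nat.lt_of_succ_le ht))]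
    have h1 : (k:ℝ) + 1 - n ≠ 0 := by linarith
    have h2 : (k:ℝ) + 1 ≠ 0 := by positivity
    field_simp
    push_cast
    ring

lemma telesc (k : ℕ) (t : ℕ) :
    ∑ j ∈ Finset.range t, ((((k:ℝ)+1-j) * Real.logb 2 ((k:ℝ)+1-j) - ((k:ℝ)-j) * Real.logb 2 ((k:ℝ)-j)))
      = ((k:ℝ)+1) * Real.logb 2 ((k:ℝ)+1) - ((k:ℝ)+1-t) * Real.logb 2 ((k:ℝ)+1-t) := by
  induction t with
  | zero => simp
  | succ n ih =>
    rw [Finset.sum_range_succ, ih]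
    push_cast
    ring_nf

lemma binEnt_frac (a : ℝ) (ha : 0 < a) :
    binEnt (a / (a+1)) = ((a+1) * Real.logb 2 (a+1) - a * Real.logb 2 a) / (a+1) := by
  have hb : (0:ℝ) < a + 1 := by linarith
  have h1 : 1 - a/(a+1) = 1/(a+1) := by field_simp; ring
  rw [binEnt, h1, Real.logb_div (ne_of_gt ha) (ne_of_gt hb),
    Real.logb_div one_ne_zero (ne_of_gt hb), Real.logb_one]
  field_simp
  ring

lemma filter_prod_eq {M : Type*} [CommMonoid M] {k : ℕ} (j : Fin k) (p : Fin k → M) (q : ℕ → M)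
    (hq : ∀ m : Fin k, q m.1 = p m) :
    ∏ m ∈ Finset.univ.filter (· < j), p m = ∏ m ∈ Finset.range j.1, q m := by
  refine Finset.prod_bij' (fun (m : Fin k) _ => (m : ℕ))
    (fun (m : ℕ) hm => (⟨m, lt_trans (Finset.mem_range.mp hm) j.isLt⟩ : Fin k))
    ?_ ?_ ?_ ?_ ?_
  · intro a ha
    simp only [Finset.mem_filter, Finset.mem_univ, true_and] at ha
    exact Finset.mem_range.mpr ha
  · intro a ha
    simp only [Finset.mem_filter, Finset.mem_univ, true_and]
    exact Finset.mem_range.mp ha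
  · intro a ha; rfl
  · intro a ha; rfl
  · intro a ha; exact (hq a).symm

theorem stmt6 (lam : ℝ) (hlam : 0 < lam ∧ lam < 1) (k : ℕ) (hk : 1 ≤ k) :
    IsMaxOn
      (fun g : Fin k → ℝ =>
        ∑ j : Fin k,
          lam ^ (∑ m ∈ Finset.univ.filter (· < j), g m) * binEnt (lam ^ g j))
      {g : Fin k → ℝ | ∀ j, 0 ≤ g j}
      (fun j : Fin k =>
        Real.log (((k : ℝ) - j.1) / ((k : ℝ) + 1 - j.1)) / Real.log lam) := by
  obtain ⟨hl0, hl1⟩ := hlam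
  have hL : Real.log lam < 0 := Real.log_neg hl0 hl1
  have hLne : Real.log lam ≠ 0 := ne_of_lt hL
  set gstar : Fin k → ℝ :=
    fun j => Real.log (((k : ℝ) - j.1) / ((k : ℝ) + 1 - j.1)) / Real.log lam with hgstar
  -- value of lam ^ gstar j
  have hpos : ∀ j : Fin k, (0:ℝ) < (k:ℝ) - j.1 := by
    intro j
    have := j.isLt
    have : (j.1 : ℝ) < k := by exact_mod_cast this
    linarith
  have hposb : ∀ j : Fin k, (0:ℝ) < (k:ℝ) + 1 - j.1 := by
    intro j; have := hpos j; linarith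
  have hxval : ∀ j : Fin k, lam ^ gstar j = ((k:ℝ) - j.1) / ((k:ℝ) + 1 - j.1) := by
    intro j
    have hq : (0:ℝ) < ((k:ℝ) - j.1) / ((k:ℝ) + 1 - j.1) := div_pos (hpos j) (hposb j)
    rw [hgstar]
    rw [Real.rpow_def_of_pos hl0, mul_div_cancel₀ _ hLne, Real.exp_log hq]
  -- value of the prefix
  have hkpos : (0:ℝ) < (k:ℝ) + 1 := by positivity
  have hprefix : ∀ j : Fin k,
      lam ^ (∑ m ∈ Finset.univ.filter (· < j), gstar m) = ((k:ℝ) + 1 - j.1) / ((k:ℝ) + 1) := by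
    intro j
    rw [rpow_sum_eq_prod lam hl0]
    rw [Finset.prod_congr rfl (fun m _ => hxval m)]
    rw [filter_prod_eq j _ (fun m => ((k:ℝ) - m) / ((k:ℝ) + 1 - m)) (fun m => rfl)]
    exact prod_frac k j.1 (le_of_lt j.isLt)
  -- per-term value at gstar
  have hterm : ∀ j : Fin k,
      lam ^ (∑ m ∈ Finset.univ.filter (· < j), gstar m) * binEnt (lam ^ gstar j)
      = ((((k:ℝ)+1-j.1) * Real.logb 2 ((k:ℝ)+1-j.1)
          - ((k:ℝ)-j.1) * Real.logb 2 ((k:ℝ)-j.1))) / ((k:ℝ)+1) := by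
    intro j
    rw [hprefix j, hxval j]
    have hab : (k:ℝ) + 1 - j.1 = ((k:ℝ) - j.1) + 1 := by ring
    rw [hab, binEnt_frac _ (hpos j)]
    have hbne : ((k:ℝ) - j.1) + 1 ≠ 0 := by have := hpos j; linarith
    field_simp
  have hval : (∑ j : Fin k,
        lam ^ (∑ m ∈ Finset.univ.filter (· < j), gstar m) * binEnt (lam ^ gstar j))
      = Real.logb 2 ((k:ℝ) + 1) := by
    rw [Finset.sum_congr rfl (fun j _ => hterm j)]
    rw [Fin.sum_univ_eq_sum_range (fun j => ((((k:ℝ)+1-j) * Real.logb 2 ((k:ℝ)+1-j)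
          - ((k:ℝ)-j) * Real.logb 2 ((k:ℝ)-j))) / ((k:ℝ)+1)) k]
    rw [← Finset.sum_div, telesc k k]
    have h1 : (k:ℝ) + 1 - (k:ℝ) = 1 := by ring
    rw [h1, Real.logb_one, mul_zero, sub_zero]
    field_simp
  -- upper bound
  rw [isMaxOn_iff]
  intro g hg
  simp only [Set.mem_setOf_eq] at hg
  rw [← hgstar]
  show _ ≤ ∑ j : Fin k,
    lam ^ (∑ m ∈ Finset.univ.filter (· < j), gstar m) * binEnt (lam ^ gstar j)
  rw [hval]
  set x : ℕ → ℝ := fun m => if h : m < k then lam ^ g ⟨m, h⟩ else 1 with hxdef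
  have hx : ∀ m, 0 < x m ∧ x m ≤ 1 := by
    intro m
    rw [hxdef]
    by_cases h : m < k
    · simp only [dif_pos h]
      exact ⟨Real.rpow_pos_of_pos hl0 _,
        Real.rpow_le_one (le_of_lt hl0) (le_of_lt hl1) (hg _)⟩
    · simp only [dif_neg h]; norm_num
  have hq : ∀ m : Fin k, x m.1 = lam ^ g m := by
    intro m
    rw [hxdef]
    simp only [dif_pos m.isLt, Fin.eta]
  have hterm2 : ∀ j : Fin k,
      lam ^ (∑ m ∈ Finset.univ.filter (· < j), g m) * binEnt (lam ^ g j)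
      = (∏ m ∈ Finset.range j.1, x m) * binEnt (x j.1) := by
    intro j
    rw [rpow_sum_eq_prod lam hl0, filter_prod_eq j _ x hq, hq j]
  rw [Finset.sum_congr rfl (fun j _ => hterm2 j)]
  rw [Fin.sum_univ_eq_sum_range (fun j => (∏ m ∈ Finset.range j, x m) * binEnt (x j)) k]
  have := upper k x hx
  push_cast at this ⊢
  linarith
end

section
/- With λ ∈ (0,1), k ≥ 1, and F(g_1,…,g_k) = ∑_{j=1}^k λ^{g_1+…+g_{j−1}} h(λ^{g_j}) evaluated at the optimal point λ^{g_j} = (k+1−j)/(k+2−j), the maximum value of F equals log₂(k+1). -/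
open Finset Real

lemma aux_binEnt (x : ℝ) (hx : 1 ≤ x) :
    (x + 1) * binEnt (x / (x + 1))
      = (x + 1) * Real.logb 2 (x + 1) - x * Real.logb 2 x := by
  have hx0 : x ≠ 0 := by linarith
  have hx1 : x + 1 ≠ 0 := by linarith
  have h1 : Real.logb 2 (x / (x + 1)) = Real.logb 2 x - Real.logb 2 (x + 1) :=
    Real.logb_div hx0 hx1
  have h2 : (1 : ℝ) - x / (x + 1) = 1 / (x + 1) := by field_simp; ring
  have h3 : Real.logb 2 (1 / (x + 1)) = -Real.logb 2 (x + 1) := by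
    rw [one_div, Real.logb_inv]
  rw [binEnt, h1, h2, h3]
  field_simp
  ring

lemma aux_prod (k : ℕ) : ∀ j ≤ k,
    ∏ m ∈ Finset.range j, (((k : ℝ) - m) / ((k : ℝ) + 1 - m))
      = ((k : ℝ) + 1 - j) / ((k : ℝ) + 1) := by
  intro j hj
  induction j with
  | zero => field_simp; simp
  | succ n ih =>
    have hn : n < k := hj
    have hd : ((k : ℝ) + 1 - n) ≠ 0 := by
      have : (n : ℝ) < k := by exact_mod_cast hn
      push_cast; linarith
    have hk1 : ((k : ℝ) + 1) ≠ 0 := by positivity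
    rw [Finset.prod_range_succ, ih (le_of_lt hn)]
    push_cast
    field_simp
    ring

theorem stmt7 (k : ℕ) (hk : 1 ≤ k) :
    ∑ j : Fin k,
        (∏ m ∈ Finset.univ.filter (· < j),
            (((k : ℝ) - m.1) / ((k : ℝ) + 1 - m.1))) *
          binEnt (((k : ℝ) - j.1) / ((k : ℝ) + 1 - j.1))
      = Real.logb 2 (k + 1) := by
  have hk1 : ((k : ℝ) + 1) ≠ 0 := by positivity
  -- rewrite filter-product over Fin as product over range
  have hfilter : ∀ j : Fin k,
      ∏ m ∈ Finset.univ.filter (· < j), (((k : ℝ) - m.1) / ((k : ℝ) + 1 - m.1))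
        = ∏ m ∈ Finset.range j.1, (((k : ℝ) - m) / ((k : ℝ) + 1 - m)) := by
    intro j
    apply Finset.prod_nbij' (fun m => m.1) (fun m => (⟨m % k, Nat.mod_lt _ (by omega)⟩ : Fin k))
    · intro a ha
      simp only [Finset.mem_filter, Finset.mem_univ, true_and, Fin.lt_def] at ha
      simpa using ha
    · intro a ha
      simp only [Finset.mem_range] at ha
      have hak : a < k := lt_of_lt_of_le ha (le_of_lt j.2)
      simp only [Finset.mem_filter, Finset.mem_univ, true_and, Fin.lt_def,
        Nat.mod_eq_of_lt hak]
      exact ha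
    · intro a ha
      have hak : a.1 < k := a.2
      simp [Fin.ext_iff, Nat.mod_eq_of_lt hak]
    · intro a ha
      simp only [Finset.mem_range] at ha
      have hak : a < k := lt_of_lt_of_le ha (le_of_lt j.2)
      simp [Nat.mod_eq_of_lt hak]
    · intros; rfl
  -- per-term evaluation
  set g : ℕ → ℝ := fun j => ((k : ℝ) + 1 - j) * Real.logb 2 ((k : ℝ) + 1 - j) with hg
  have hterm : ∀ j : Fin k,
      (∏ m ∈ Finset.univ.filter (· < j), (((k : ℝ) - m.1) / ((k : ℝ) + 1 - m.1))) *
          binEnt (((k : ℝ) - j.1) / ((k : ℝ) + 1 - j.1))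
        = (g j.1 - g (j.1 + 1)) / ((k : ℝ) + 1) := by
    intro j
    rw [hfilter j, aux_prod k j.1 (le_of_lt j.2)]
    set x : ℝ := (k : ℝ) - j.1 with hx
    have hx1 : 1 ≤ x := by
      have : (j.1 : ℝ) + 1 ≤ k := by exact_mod_cast j.2
      simp [hx]; linarith
    have hxx : (k : ℝ) + 1 - j.1 = x + 1 := by ring
    have hgj : g j.1 = (x + 1) * Real.logb 2 (x + 1) := by simp [hg, hxx]
    have hgj1 : g (j.1 + 1) = x * Real.logb 2 x := by
      simp only [hg, hx]
      push_cast
      ring_nf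
    rw [hxx, div_mul_eq_mul_div]
    congr 1
    rw [hgj, hgj1]
    exact aux_binEnt x hx1
  rw [Finset.sum_congr rfl (fun j _ => hterm j)]
  rw [Fin.sum_univ_eq_sum_range (fun j => (g j - g (j + 1)) / ((k : ℝ) + 1))]
  rw [← Finset.sum_div, Finset.sum_range_sub' g]
  have h0 : g 0 = ((k : ℝ) + 1) * Real.logb 2 ((k : ℝ) + 1) := by simp [hg]
  have hk' : g k = 0 := by simp [hg]
  rw [h0, hk']
  field_simp; ring
end

section
/- The entropy of the Binomial(m, 1/2) distribution is strictly increasing in m: H(Binomial(m+1, 1/2)) > H(Binomial(m, 1/2)) for every natural number m. -/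
open Finset Real

/-- Shannon entropy (base 2) of the `Binomial(m, 1/2)` distribution. -/
noncomputable def binomEnt (m : ℕ) : ℝ :=
  -∑ j ∈ Finset.range (m + 1),
    ((m.choose j : ℝ) * (1 / 2) ^ m) *
      Real.logb 2 ((m.choose j : ℝ) * (1 / 2) ^ m)


lemma aux_logb_div (a : ℝ) : a * Real.logb 2 a = (a * Real.log a) / Real.log 2 := by
  rw [Real.logb, mul_div_assoc]

lemma aux_mid_le {a b : ℝ} (ha : 0 ≤ a) (hb : 0 ≤ b) :
    ((a+b)/2) * Real.logb 2 ((a+b)/2) ≤ (a * Real.logb 2 a + b * Real.logb 2 b)/2 := by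
  have h := Real.convexOn_mul_log.2 (Set.mem_Ici.2 ha) (Set.mem_Ici.2 hb)
    (by norm_num : (0:ℝ) ≤ 1/2) (by norm_num : (0:ℝ) ≤ 1/2) (by norm_num)
  simp only [smul_eq_mul] at h
  have e : (1/2:ℝ)*a + (1/2:ℝ)*b = (a+b)/2 := by ring
  rw [e] at h
  have hl : 0 < Real.log 2 := Real.log_pos (by norm_num)
  rw [aux_logb_div, aux_logb_div, aux_logb_div]
  have e2 : (a * Real.log a / Real.log 2 + b * Real.log b / Real.log 2)/2
      = ((1/2) * (a * Real.log a) + (1/2) * (b * Real.log b)) / Real.log 2 := by ring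
  rw [e2]
  exact (div_le_div_iff_of_pos_right hl).2 h

lemma aux_mid_lt {a b : ℝ} (hab : a ≠ b) (ha : 0 ≤ a) (hb : 0 ≤ b) :
    ((a+b)/2) * Real.logb 2 ((a+b)/2) < (a * Real.logb 2 a + b * Real.logb 2 b)/2 := by
  have h := Real.strictConvexOn_mul_log.2 (Set.mem_Ici.2 ha) (Set.mem_Ici.2 hb) hab
    (by norm_num : (0:ℝ) < 1/2) (by norm_num : (0:ℝ) < 1/2) (by norm_num)
  simp only [smul_eq_mul] at h
  have e : (1/2:ℝ)*a + (1/2:ℝ)*b = (a+b)/2 := by ring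
  rw [e] at h
  have hl : 0 < Real.log 2 := Real.log_pos (by norm_num)
  rw [aux_logb_div, aux_logb_div, aux_logb_div]
  have e2 : (a * Real.log a / Real.log 2 + b * Real.log b / Real.log 2)/2
      = ((1/2) * (a * Real.log a) + (1/2) * (b * Real.log b)) / Real.log 2 := by ring
  rw [e2]
  exact (div_lt_div_iff_of_pos_right hl).2 h

theorem stmt16 (m : ℕ) : binomEnt (m + 1) > binomEnt m := by
  set F : ℝ → ℝ := fun x => x * Real.logb 2 x with hF
  set p : ℕ → ℝ := fun j => (m.choose j : ℝ) * (1/2:ℝ)^m with hp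
  set s : ℕ → ℝ := fun j => if j = 0 then 0 else p (j-1) with hs
  have hF0 : F 0 = 0 := by simp [hF]
  have hpnn : ∀ j, 0 ≤ p j := fun j => by positivity
  have hsnn : ∀ j, 0 ≤ s j := by
    intro j; by_cases h : j = 0 <;> simp [hs, h, hpnn]
  -- the Binomial(m+1) pmf is the midpoint
  have hq : ∀ j, ((m+1).choose j : ℝ) * (1/2:ℝ)^(m+1) = (p j + s j)/2 := by
    intro j
    cases j with
    | zero => simp [hp, hs, pow_succ]; ring
    | succ k =>
        have : (m+1).choose (k+1) = m.choose k + m.choose (k+1) :=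
          Nat.succ_sub_one (m.choose k) ▸ Nat.choose_succ_succ m k
        rw [this]
        push_cast
        simp only [hp, hs, if_neg (Nat.succ_ne_zero k), Nat.succ_sub_one]
        rw [pow_succ]
        ring
  have key : ∑ j ∈ Finset.range (m+2), F (((m+1).choose j : ℝ) * (1/2:ℝ)^(m+1))
      < ∑ j ∈ Finset.range (m+1), F (p j) := by
    have step1 : ∑ j ∈ Finset.range (m+2), F (((m+1).choose j : ℝ) * (1/2:ℝ)^(m+1))
        < ∑ j ∈ Finset.range (m+2), (F (p j) + F (s j))/2 := by
      apply Finset.sum_lt_sum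
      · intro j _
        rw [hq j]
        exact aux_mid_le (hpnn j) (hsnn j)
      · refine ⟨0, Finset.mem_range.2 (by omega), ?_⟩
        rw [hq 0]
        have h0 : p 0 ≠ s 0 := by
          simp only [hp, hs, if_pos rfl, Nat.choose_zero_right, Nat.cast_one, one_mul]
          positivity
        exact aux_mid_lt h0 (hpnn 0) (hsnn 0)
    have step2 : ∑ j ∈ Finset.range (m+2), (F (p j) + F (s j))/2
        = ∑ j ∈ Finset.range (m+1), F (p j) := by
      have e0 : ∑ j ∈ Finset.range (m+2), (F (p j) + F (s j))/2
          = ((∑ j ∈ Finset.range (m+2), F (p j)) + ∑ j ∈ Finset.range (m+2), F (s j))/2 := by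
        rw [← Finset.sum_div, Finset.sum_add_distrib]
      rw [e0]
      have e1 : ∑ j ∈ Finset.range (m+2), F (p j) = ∑ j ∈ Finset.range (m+1), F (p j) := by
        rw [Finset.sum_range_succ]
        have : p (m+1) = 0 := by simp [hp, Nat.choose_succ_self]
        rw [this, hF0, add_zero]
      have e2 : ∑ j ∈ Finset.range (m+2), F (s j) = ∑ j ∈ Finset.range (m+1), F (p j) := by
        rw [Finset.sum_range_succ']
        simp only [hs, if_pos rfl, if_neg (Nat.succ_ne_zero _), Nat.succ_sub_one, hF0, add_zero]
      rw [e1, e2]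
      ring
    linarith
  have eb1 : binomEnt (m+1) = -∑ j ∈ Finset.range (m+2), F (((m+1).choose j : ℝ) * (1/2:ℝ)^(m+1)) := by
    simp [binomEnt, hF]
  have eb2 : binomEnt m = -∑ j ∈ Finset.range (m+1), F (p j) := by
    simp [binomEnt, hF, hp]
  rw [eb1, eb2]
  linarith
end
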